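/- arXiv:2311.07048 — 6 statements merged into one kernel-verified Lean document; each statement's English description precedes it below -/
import Mathlib

section
/- Let n be an odd composite number such that for every integer a coprime to n, a^((n-1)/2) ≡ (a | n) (mod n), where (a | n) is the Jacobi symbol. Then for every integer a coprime to n, a^((n-1)/2) ≡ 1 (mod n); in particular no integer a coprime to n satisfies a^((n-1)/2) ≡ -1 (mod n). -/
open jacobiSym in
private lemma psp_aux_crt (n : ℕ) (hodd : Odd n) (h1 : 1 < n)
    (h : ∀ a : ℤ, Int.gcd a n = 1 →
      (a : ZMod n) ^ ((n - 1) / 2) = ((jacobiSym a n : ℤ) : ZMod n))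
    (w d : ℕ) (hw : 1 < w) (hd : 1 < d) (hco : Nat.Coprime w d)
    (hn : w * d = n) (a0 : ℤ) (ha0 : Int.gcd a0 n = 1)
    (hJ : jacobiSym a0 w = -1) : False := by
  subst hn
  haveI : NeZero w := ⟨by omega⟩
  haveI : NeZero d := ⟨by omega⟩
  haveI : NeZero (w * d) := ⟨by positivity⟩
  -- d is odd
  have hdodd : Odd d := by
    rcases Nat.even_or_odd d with he | ho
    · exact absurd (he.mul_left w) (Nat.not_even_iff_odd.mpr hodd)
    · exact ho
  haveI : Fact (2 < d) := ⟨by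
    rcases hdodd with ⟨m, hm⟩; omega⟩
  -- build b via CRT
  set r := ((a0 : ZMod w)).val with hr
  have hrmod : (r : ℤ) = a0 % (w : ℤ) := ZMod.val_intCast a0
  obtain ⟨k, hk1, hk2⟩ := Nat.chineseRemainder hco r 1
  set b : ℤ := (k : ℤ) with hb
  have hbw : b % (w : ℤ) = a0 % (w : ℤ) := by
    have h' : ((k % w : ℕ) : ℤ) = ((r % w : ℕ) : ℤ) := by exact_mod_cast hk1
    push_cast at h'
    rw [hb, h', hrmod, Int.emod_emod_of_dvd _ dvd_rfl]
  have hbd : b % (d : ℤ) = (1 : ℤ) % (d : ℤ) := by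
    have h' : ((k % d : ℕ) : ℤ) = ((1 % d : ℕ) : ℤ) := by exact_mod_cast hk2
    push_cast at h'
    exact h'
  have hJbw : jacobiSym b w = -1 := by
    rw [jacobiSym.mod_left' hbw, hJ]
  have hJbd : jacobiSym b d = 1 := by
    rw [jacobiSym.mod_left' hbd, jacobiSym.one_left]
  -- b is coprime to w*d
  have hgw : Int.gcd b w = 1 := by
    by_contra hg
    exact absurd (jacobiSym.eq_zero_iff_not_coprime.mpr hg) (by rw [hJbw]; norm_num)
  have hgd : Int.gcd b d = 1 := by
    by_contra hg
    exact absurd (jacobiSym.eq_zero_iff_not_coprime.mpr hg) (by rw [hJbd]; norm_num)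
  have hgcd : Int.gcd b (w * d) = 1 := by
    have hw' := Int.isCoprime_iff_gcd_eq_one.mpr hgw
    have hd' := Int.isCoprime_iff_gcd_eq_one.mpr hgd
    have := hw'.mul_right hd'
    rw [Int.isCoprime_iff_gcd_eq_one] at this
    simpa using this
  have hJbn : jacobiSym b (w * d) = -1 := by
    rw [jacobiSym.mul_right, hJbw, hJbd]; ring
  have hpow := h b (by exact_mod_cast hgcd)
  rw [hJbn] at hpow
  -- push to ZMod d
  have hdvd : d ∣ w * d := dvd_mul_left d w
  have := congrArg (ZMod.castHom hdvd (ZMod d)) hpow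
  rw [map_pow, map_intCast, map_intCast] at this
  have hb1 : ((b : ℤ) : ZMod d) = 1 := by
    have : ((b : ℤ) : ZMod d) = ((1 : ℤ) : ZMod d) := by
      rw [ZMod.intCast_eq_intCast_iff]
      exact hbd
    simpa using this
  rw [hb1, one_pow] at this
  push_cast at this
  exact ZMod.neg_one_ne_one this.symm

private lemma psp_not_prime_pow (n : ℕ) (hodd : Odd n) (h1 : 1 < n) (hcomp : ¬ n.Prime)
    (h : ∀ a : ℤ, Int.gcd a n = 1 →
      (a : ZMod n) ^ ((n - 1) / 2) = ((jacobiSym a n : ℤ) : ZMod n)) :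
    ¬ IsPrimePow n := by
  rintro ⟨p, k, hp, hk, hn⟩
  haveI : NeZero n := ⟨by omega⟩
  have hp' : p.Prime := hp.nat_prime
  haveI : Fact p.Prime := ⟨hp'⟩
  have hk2 : 2 ≤ k := by
    by_contra hlt
    have hk1 : k = 1 := by omega
    exact hcomp (by rw [← hn, hk1, pow_one]; exact hp')
  -- every unit satisfies u ^ (n - 1) = 1
  have hall : ∀ u : (ZMod n)ˣ, u ^ (n - 1) = 1 := by
    intro u
    have hco := ZMod.val_coe_unit_coprime u
    have hg : Int.gcd ((u : ZMod n).val : ℤ) (n : ℤ) = 1 := by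
      rw [Int.gcd_natCast_natCast]; exact hco
    have hpow := h _ hg
    have hcastu : (((u : ZMod n).val : ℤ) : ZMod n) = (u : ZMod n) := by
      push_cast
      rw [ZMod.natCast_val, ZMod.cast_id]
    rw [hcastu] at hpow
    have hhalf : (n - 1) / 2 * 2 = n - 1 := by
      rcases hodd with ⟨m, hm⟩; omega
    have hJ2 : ((jacobiSym ((u : ZMod n).val : ℤ) n : ℤ) : ZMod n) ^ 2 = 1 := by
      rcases jacobiSym.eq_one_or_neg_one hg with h1' | h1' <;> rw [h1'] <;> push_cast <;> ring
    have : (u : ZMod n) ^ (n - 1) = 1 := by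
      rw [← hhalf, pow_mul, hpow, hJ2]
    exact Units.ext (by rw [Units.val_pow_eq_pow_val]; simpa using this)
  -- Cauchy: there is an element of order p
  have hcard : p ∣ Fintype.card (ZMod n)ˣ := by
    rw [ZMod.card_units_eq_totient, ← hn, Nat.totient_prime_pow hp' (by omega)]
    exact Dvd.dvd.mul_right (dvd_pow_self p (by omega)) _
  obtain ⟨g, hg⟩ := exists_prime_orderOf_dvd_card p hcard
  have hdvd1 : p ∣ n - 1 := by
    rw [← hg]
    exact orderOf_dvd_of_pow_eq_one (hall g)
  have hdvdn : p ∣ n := by rw [← hn]; exact dvd_pow_self p (by omega)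
  have : p ∣ 1 := by
    have := Nat.dvd_sub hdvdn hdvd1
    rwa [Nat.sub_sub_self (by omega)] at this
  exact Nat.Prime.one_lt hp' |>.ne' (Nat.eq_one_of_dvd_one this ▸ rfl) |>.elim

/-- An absolute Euler pseudoprime (an odd composite `n` with
`a ^ ((n-1)/2) ≡ (a | n) (mod n)` for all `a` coprime to `n`, where `(a | n)` is the
Jacobi symbol) satisfies `a ^ ((n-1)/2) ≡ 1 (mod n)` for every `a` coprime to `n`;
in particular no `a` coprime to `n` satisfies `a ^ ((n-1)/2) ≡ -1 (mod n)`. -/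
theorem absolute_euler_psp_pow_eq_one (n : ℕ) (hodd : Odd n) (h1 : 1 < n)
    (hcomp : ¬ n.Prime)
    (h : ∀ a : ℤ, Int.gcd a n = 1 →
      (a : ZMod n) ^ ((n - 1) / 2) = ((jacobiSym a n : ℤ) : ZMod n)) :
    (∀ a : ℤ, Int.gcd a n = 1 → (a : ZMod n) ^ ((n - 1) / 2) = 1) ∧
    ¬ ∃ a : ℤ, Int.gcd a n = 1 ∧ (a : ZMod n) ^ ((n - 1) / 2) = -1 := by
  haveI : NeZero n := ⟨by omega⟩
  haveI : Fact (2 < n) := ⟨by rcases hodd with ⟨m, hm⟩; omega⟩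
  have hpp := psp_not_prime_pow n hodd h1 hcomp h
  have key : ∀ a : ℤ, Int.gcd a n = 1 → jacobiSym a n = 1 := by
    intro a ha
    rcases jacobiSym.eq_one_or_neg_one (b := n) ha with h1' | hneg
    · exact h1'
    exfalso
    -- factor n = u * v
    have hn0 : n ≠ 0 := by omega
    set p := n.minFac with hpdef
    have hp : p.Prime := Nat.minFac_prime (by omega)
    have hpd : p ∣ n := Nat.minFac_dvd n
    set kk := n.factorization p with hkk
    set u := p ^ kk with hu
    set v := ordCompl[p] n with hv
    have hmul : u * v = n := Nat.ordProj_mul_ordCompl_eq_self n p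
    have hcov : Nat.Coprime u v :=
      Nat.Coprime.pow_left _ (Nat.coprime_ordCompl hp hn0)
    have hk1 : 0 < kk := hp.factorization_pos_of_dvd hn0 hpd
    have hu1 : 1 < u := Nat.one_lt_pow (by omega) hp.one_lt
    have hv0 : v ≠ 0 := by
      intro h0; rw [h0, mul_zero] at hmul; omega
    have hv1 : 1 < v := by
      rcases Nat.lt_or_ge v 2 with hlt | hge
      · interval_cases v
        · omega
        · exfalso; apply hpp
          exact ⟨p, kk, hp.prime, hk1, by rw [← hmul, mul_one]⟩
      · omega
    haveI : NeZero u := ⟨by omega⟩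
    haveI : NeZero v := ⟨by omega⟩
    have hsplit : jacobiSym a u * jacobiSym a v = -1 := by
      rw [← jacobiSym.mul_right, hmul, hneg]
    have hgau : Int.gcd a u = 1 := by
      have hcn := Int.isCoprime_iff_gcd_eq_one.mpr ha
      have : IsCoprime a (u : ℤ) :=
        hcn.of_isCoprime_of_dvd_right (by exact_mod_cast (⟨v, hmul.symm⟩ : u ∣ n))
      rwa [Int.isCoprime_iff_gcd_eq_one] at this
    have hgav : Int.gcd a v = 1 := by
      have hcn := Int.isCoprime_iff_gcd_eq_one.mpr ha
      have : IsCoprime a (v : ℤ) :=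
        hcn.of_isCoprime_of_dvd_right (by exact_mod_cast (⟨u, by rw [← hmul, mul_comm]⟩ : v ∣ n))
      rwa [Int.isCoprime_iff_gcd_eq_one] at this
    rcases jacobiSym.eq_one_or_neg_one (b := u) hgau with h1u | hnu
    · have hnv : jacobiSym a v = -1 := by rw [h1u, one_mul] at hsplit; exact hsplit
      exact psp_aux_crt n hodd h1 h v u hv1 hu1 hcov.symm (by rw [mul_comm]; exact hmul) a ha hnv
    · exact psp_aux_crt n hodd h1 h u v hu1 hv1 hcov hmul a ha hnu
  constructor
  · intro a ha
    rw [h a ha, key a ha]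
    norm_num
  · rintro ⟨a, ha, hpow⟩
    rw [h a ha, key a ha] at hpow
    norm_num at hpow
    exact ZMod.neg_one_ne_one hpow.symm
end

section
/- Let m ≥ 3 be an odd integer and let n = m². Then ⌊√n⌋ = m and m^((n-1)/2) is congruent to neither 1 nor -1 modulo n; consequently every odd perfect square n > 1 fails the test condition ⌊√n⌋^((n-1)/2) ≡ ±1 (mod n). -/
lemma aux_pow_zero (m : ℕ) (hm : 3 ≤ m) :
    (m : ZMod (m ^ 2)) ^ ((m ^ 2 - 1) / 2) = 0 := by
  have h9 : 9 ≤ m ^ 2 := by nlinarith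
  have h2 : 2 ≤ (m ^ 2 - 1) / 2 := by omega
  obtain ⟨e, he⟩ : ∃ e, (m ^ 2 - 1) / 2 = e + 2 := ⟨(m ^ 2 - 1) / 2 - 2, by omega⟩
  have hz : (m : ZMod (m ^ 2)) ^ 2 = 0 := by
    rw [← Nat.cast_pow, ZMod.natCast_self]
  rw [he, pow_add, hz, mul_zero]

lemma aux_main (m : ℕ) (hm : 3 ≤ m) :
    (m : ZMod (m ^ 2)) ^ ((m ^ 2 - 1) / 2) ≠ 1 ∧
    (m : ZMod (m ^ 2)) ^ ((m ^ 2 - 1) / 2) ≠ -1 := by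
  have h9 : 9 ≤ m ^ 2 := by nlinarith
  haveI : Fact (1 < m ^ 2) := ⟨by omega⟩
  rw [aux_pow_zero m hm]
  constructor
  · exact zero_ne_one
  · intro h
    have : (1 : ZMod (m ^ 2)) = 0 := by
      have := congrArg Neg.neg h
      simpa using this.symm
    exact one_ne_zero this

/-- For odd `m ≥ 3` and `n = m ^ 2`, one has `⌊√n⌋ = m` and `m ^ ((n-1)/2)` is congruent
to neither `1` nor `-1` modulo `n`; consequently every odd perfect square `n > 1` fails the
test condition `⌊√n⌋ ^ ((n-1)/2) ≡ ±1 (mod n)`. -/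
theorem odd_square_fails_sqrt_base (m : ℕ) (hm : 3 ≤ m) (hodd : Odd m) (n : ℕ)
    (hn : n = m ^ 2) :
    Nat.sqrt n = m ∧
    (m : ZMod n) ^ ((n - 1) / 2) ≠ 1 ∧
    (m : ZMod n) ^ ((n - 1) / 2) ≠ -1 ∧
    ∀ k : ℕ, 1 < k → Odd k → IsSquare k →
      ¬ ((Nat.sqrt k : ZMod k) ^ ((k - 1) / 2) = 1 ∨
         (Nat.sqrt k : ZMod k) ^ ((k - 1) / 2) = -1) := by
  subst hn
  obtain ⟨h1, h2⟩ := aux_main m hm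
  refine ⟨?_, h1, h2, ?_⟩
  · exact Nat.sqrt_eq' m
  · intro k hk hkodd ⟨r, hr⟩
    have hrodd : Odd r := (Nat.odd_mul.mp (hr ▸ hkodd)).1
    have hr1 : 1 < r := by nlinarith [hr ▸ hk]
    have hr3 : 3 ≤ r := by
      obtain ⟨t, ht⟩ := hrodd; omega
    have hk2 : k = r ^ 2 := by rw [hr]; ring
    subst hk2
    obtain ⟨g1, g2⟩ := aux_main r hr3
    rw [Nat.sqrt_eq']
    rintro (h | h)
    · exact g1 h
    · exact g2 h
end

section
/- The number 46657 is composite, yet it satisfies 46657 ≡ 1 (mod 8), 2^23328 ≡ 1 (mod 46657), and a^23328 ≡ 1 (mod 46657) for each a in {216, 217, 152, 153} (where 216 = ⌊√46657⌋ and 152 = ⌊√(46657/2)⌋); however, the Legendre symbol (46657 | 5) = -1 while 5^23328 is not congruent to -1 modulo 46657, so 46657 is detected as composite by the third step of the Gauss-Euler test. -/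
/-!
`46657 = 13 · 37 · 97`, and each of `12`, `36`, `96` divides `23328 = (46657 - 1) / 2`. Hence the
Carmichael function satisfies `λ(46657) ∣ 23328`, so `a ^ 23328 ≡ 1 (mod 46657)` for *every* `a`
coprime to `46657`: all Fermat-type checks pass. In particular `5 ^ 23328 ≡ 1`, whereas for a
prime modulus Euler's criterion and reciprocity would force `5 ^ 23328 ≡ (46657 | 5) = -1`.
-/

open ArithmeticFunction

theorem carmichael_prime_dvd {p : ℕ} (hp : p.Prime) : carmichael p ∣ p - 1 :=
  Nat.totient_prime hp ▸ carmichael_dvd_totient p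

theorem natCast_pow_eq_one_of_carmichael_dvd {n k a : ℕ} (hk : carmichael n ∣ k)
    (ha : a.Coprime n) : (a : ZMod n) ^ k = 1 := by
  obtain ⟨u, hu⟩ := (ZMod.isUnit_iff_coprime a n).mpr ha
  obtain ⟨m, rfl⟩ := hk
  rw [← hu, ← Units.val_pow_eq_pow_val, pow_mul, pow_carmichael, one_pow, Units.val_one]

theorem carmichael_46657_dvd : carmichael 46657 ∣ 23328 := by
  rw [show 46657 = 13 * 37 * 97 by norm_num, carmichael_mul (by norm_num),
    carmichael_mul (by norm_num)]
  refine Nat.lcm_dvd (Nat.lcm_dvd ?_ ?_) ?_ <;>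
    exact (carmichael_prime_dvd (by norm_num)).trans (by norm_num)

/-- `46657` is composite, satisfies `46657 ≡ 1 (mod 8)`, `2 ^ 23328 ≡ 1 (mod 46657)`, and
`a ^ 23328 ≡ 1 (mod 46657)` for `a ∈ {216, 217, 152, 153}` (with `216 = ⌊√46657⌋` and
`152 = ⌊√(46657/2)⌋`), but the Legendre symbol `(46657 | 5) = -1` while
`5 ^ 23328 ≢ -1 (mod 46657)`. -/
theorem gauss_euler_detects_46657 :
    ¬ (46657 : ℕ).Prime ∧
    46657 % 8 = 1 ∧
    (2 : ZMod 46657) ^ 23328 = 1 ∧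
    Nat.sqrt 46657 = 216 ∧
    Nat.sqrt (46657 / 2) = 152 ∧
    (∀ a ∈ ({216, 217, 152, 153} : Finset ℕ), (a : ZMod 46657) ^ 23328 = 1) ∧
    @legendreSym 5 ⟨by norm_num⟩ 46657 = -1 ∧
    (5 : ZMod 46657) ^ 23328 ≠ -1 := by
  have pow_eq_one {a : ℕ} (ha : a.Coprime 46657) : (a : ZMod 46657) ^ 23328 = 1 :=
    natCast_pow_eq_one_of_carmichael_dvd carmichael_46657_dvd ha
  have two_pow : (2 : ZMod 46657) ^ 23328 = 1 := by
    simpa only [Nat.cast_ofNat] using pow_eq_one (a := 2) (by norm_num)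
  have five_pow : (5 : ZMod 46657) ^ 23328 = 1 := by
    simpa only [Nat.cast_ofNat] using pow_eq_one (a := 5) (by norm_num)
  have sqrt_pow : ∀ a ∈ ({216, 217, 152, 153} : Finset ℕ), (a : ZMod 46657) ^ 23328 = 1 := by
    intro a ha
    apply pow_eq_one
    simp only [Finset.mem_insert, Finset.mem_singleton] at ha
    rcases ha with rfl | rfl | rfl | rfl <;> norm_num
  refine ⟨by norm_num, by norm_num, two_pow, (Nat.eq_sqrt.mpr (by norm_num)).symm,
    (Nat.eq_sqrt.mpr (by norm_num)).symm, sqrt_pow, by decide, ?_⟩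
  rw [five_pow]
  decide
end

section
/- Let N = 6164578258027337. Then N = 64107089 × 96160633 (so N is composite), yet N satisfies all of the following: N ≡ 1 (mod 8) and 2^((N-1)/2) ≡ 1 (mod N); ⌊√N⌋^((N-1)/2) ≡ -1 (mod N); (⌊√N⌋+1)^((N-1)/2) ≡ 1 (mod N); ⌊√(N/2)⌋^((N-1)/2) ≡ 1 (mod N); (⌊√(N/2)⌋+1)^((N-1)/2) ≡ -1 (mod N); the Jacobi symbol (N | 5) = -1 and 5^((N-1)/2) ≡ -1 (mod N). However, the Jacobi symbol (N | 17) = -1 while 17^((N-1)/2) is not congruent to -1 modulo N. -/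
set_option maxRecDepth 10000

private lemma zsq {M : ℕ} (a b c : ZMod M) (k : ℕ) (h : a ^ k = b) (hc : b * b = c) :
    a ^ (2 * k) = c := by rw [two_mul, pow_add, h, hc]

private lemma zsqm {M : ℕ} (a b c : ZMod M) (k : ℕ) (h : a ^ k = b) (hc : b * b * a = c) :
    a ^ (2 * k + 1) = c := by rw [two_mul, pow_succ, pow_add, h, hc]

private lemma ch2 : (2 : ZMod 6164578258027337) ^ 3082289129013668 = 1 := by
  have h1 : (2 : ZMod 6164578258027337) ^ 1 = 2 := pow_one _
  have h2 : (2 : ZMod 6164578258027337) ^ 2 = 4 := by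
    rw [pow_two]; decide
  have h3 : (2 : ZMod 6164578258027337) ^ 5 = 32 := by
    rw [show (5:ℕ) = 2 * 2 + 1 by norm_num]
    exact zsqm _ _ _ _ h2 (by decide)
  have h4 : (2 : ZMod 6164578258027337) ^ 10 = 1024 := by
    rw [show (10:ℕ) = 2 * 5 by norm_num]
    exact zsq _ _ _ _ h3 (by decide)
  have h5 : (2 : ZMod 6164578258027337) ^ 21 = 2097152 := by
    rw [show (21:ℕ) = 2 * 10 + 1 by norm_num]
    exact zsqm _ _ _ _ h4 (by decide)
  have h6 : (2 : ZMod 6164578258027337) ^ 43 = 8796093022208 := by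
    rw [show (43:ℕ) = 2 * 21 + 1 by norm_num]
    exact zsqm _ _ _ _ h5 (by decide)
  have h7 : (2 : ZMod 6164578258027337) ^ 87 = 310210921390465 := by
    rw [show (87:ℕ) = 2 * 43 + 1 by norm_num]
    exact zsqm _ _ _ _ h6 (by decide)
  have h8 : (2 : ZMod 6164578258027337) ^ 175 = 1355089099574884 := by
    rw [show (175:ℕ) = 2 * 87 + 1 by norm_num]
    exact zsqm _ _ _ _ h7 (by decide)
  have h9 : (2 : ZMod 6164578258027337) ^ 350 = 1688578704098196 := by
    rw [show (350:ℕ) = 2 * 175 by norm_num]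
    exact zsq _ _ _ _ h8 (by decide)
  have h10 : (2 : ZMod 6164578258027337) ^ 700 = 4539214566406267 := by
    rw [show (700:ℕ) = 2 * 350 by norm_num]
    exact zsq _ _ _ _ h9 (by decide)
  have h11 : (2 : ZMod 6164578258027337) ^ 1401 = 1850229931789757 := by
    rw [show (1401:ℕ) = 2 * 700 + 1 by norm_num]
    exact zsqm _ _ _ _ h10 (by decide)
  have h12 : (2 : ZMod 6164578258027337) ^ 2803 = 3784540878233322 := by
    rw [show (2803:ℕ) = 2 * 1401 + 1 by norm_num]
    exact zsqm _ _ _ _ h11 (by decide)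
  have h13 : (2 : ZMod 6164578258027337) ^ 5606 = 2336931821638851 := by
    rw [show (5606:ℕ) = 2 * 2803 by norm_num]
    exact zsq _ _ _ _ h12 (by decide)
  have h14 : (2 : ZMod 6164578258027337) ^ 11213 = 4834987995548387 := by
    rw [show (11213:ℕ) = 2 * 5606 + 1 by norm_num]
    exact zsqm _ _ _ _ h13 (by decide)
  have h15 : (2 : ZMod 6164578258027337) ^ 22426 = 1247441418041625 := by
    rw [show (22426:ℕ) = 2 * 11213 by norm_num]
    exact zsq _ _ _ _ h14 (by decide)
  have h16 : (2 : ZMod 6164578258027337) ^ 44853 = 6104352174841091 := by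
    rw [show (44853:ℕ) = 2 * 22426 + 1 by norm_num]
    exact zsqm _ _ _ _ h15 (by decide)
  have h17 : (2 : ZMod 6164578258027337) ^ 89706 = 3793982839830494 := by
    rw [show (89706:ℕ) = 2 * 44853 by norm_num]
    exact zsq _ _ _ _ h16 (by decide)
  have h18 : (2 : ZMod 6164578258027337) ^ 179412 = 4418515173365953 := by
    rw [show (179412:ℕ) = 2 * 89706 by norm_num]
    exact zsq _ _ _ _ h17 (by decide)
  have h19 : (2 : ZMod 6164578258027337) ^ 358825 = 1566705922004562 := by
    rw [show (358825:ℕ) = 2 * 179412 + 1 by norm_num]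
    exact zsqm _ _ _ _ h18 (by decide)
  have h20 : (2 : ZMod 6164578258027337) ^ 717651 = 2982620087132298 := by
    rw [show (717651:ℕ) = 2 * 358825 + 1 by norm_num]
    exact zsqm _ _ _ _ h19 (by decide)
  have h21 : (2 : ZMod 6164578258027337) ^ 1435302 = 281779665841112 := by
    rw [show (1435302:ℕ) = 2 * 717651 by norm_num]
    exact zsq _ _ _ _ h20 (by decide)
  have h22 : (2 : ZMod 6164578258027337) ^ 2870605 = 5769814836366119 := by
    rw [show (2870605:ℕ) = 2 * 1435302 + 1 by norm_num]
    exact zsqm _ _ _ _ h21 (by decide)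
  have h23 : (2 : ZMod 6164578258027337) ^ 5741210 = 941282330579235 := by
    rw [show (5741210:ℕ) = 2 * 2870605 by norm_num]
    exact zsq _ _ _ _ h22 (by decide)
  have h24 : (2 : ZMod 6164578258027337) ^ 11482421 = 5344418973962006 := by
    rw [show (11482421:ℕ) = 2 * 5741210 + 1 by norm_num]
    exact zsqm _ _ _ _ h23 (by decide)
  have h25 : (2 : ZMod 6164578258027337) ^ 22964843 = 4212076719064018 := by
    rw [show (22964843:ℕ) = 2 * 11482421 + 1 by norm_num]
    exact zsqm _ _ _ _ h24 (by decide)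
  have h26 : (2 : ZMod 6164578258027337) ^ 45929687 = 2190386133500534 := by
    rw [show (45929687:ℕ) = 2 * 22964843 + 1 by norm_num]
    exact zsqm _ _ _ _ h25 (by decide)
  have h27 : (2 : ZMod 6164578258027337) ^ 91859374 = 2164040217676568 := by
    rw [show (91859374:ℕ) = 2 * 45929687 by norm_num]
    exact zsq _ _ _ _ h26 (by decide)
  have h28 : (2 : ZMod 6164578258027337) ^ 183718748 = 4464548971617812 := by
    rw [show (183718748:ℕ) = 2 * 91859374 by norm_num]
    exact zsq _ _ _ _ h27 (by decide)
  have h29 : (2 : ZMod 6164578258027337) ^ 367437497 = 4847772653490084 := by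
    rw [show (367437497:ℕ) = 2 * 183718748 + 1 by norm_num]
    exact zsqm _ _ _ _ h28 (by decide)
  have h30 : (2 : ZMod 6164578258027337) ^ 734874994 = 1223110390430744 := by
    rw [show (734874994:ℕ) = 2 * 367437497 by norm_num]
    exact zsq _ _ _ _ h29 (by decide)
  have h31 : (2 : ZMod 6164578258027337) ^ 1469749989 = 2310051546639211 := by
    rw [show (1469749989:ℕ) = 2 * 734874994 + 1 by norm_num]
    exact zsqm _ _ _ _ h30 (by decide)
  have h32 : (2 : ZMod 6164578258027337) ^ 2939499978 = 2638326948540456 := by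
    rw [show (2939499978:ℕ) = 2 * 1469749989 by norm_num]
    exact zsq _ _ _ _ h31 (by decide)
  have h33 : (2 : ZMod 6164578258027337) ^ 5878999956 = 1579198362385354 := by
    rw [show (5878999956:ℕ) = 2 * 2939499978 by norm_num]
    exact zsq _ _ _ _ h32 (by decide)
  have h34 : (2 : ZMod 6164578258027337) ^ 11757999912 = 4062880549221048 := by
    rw [show (11757999912:ℕ) = 2 * 5878999956 by norm_num]
    exact zsq _ _ _ _ h33 (by decide)
  have h35 : (2 : ZMod 6164578258027337) ^ 23515999824 = 4803990495544235 := by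
    rw [show (23515999824:ℕ) = 2 * 11757999912 by norm_num]
    exact zsq _ _ _ _ h34 (by decide)
  have h36 : (2 : ZMod 6164578258027337) ^ 47031999649 = 1244851662191458 := by
    rw [show (47031999649:ℕ) = 2 * 23515999824 + 1 by norm_num]
    exact zsqm _ _ _ _ h35 (by decide)
  have h37 : (2 : ZMod 6164578258027337) ^ 94063999298 = 1109019465267604 := by
    rw [show (94063999298:ℕ) = 2 * 47031999649 by norm_num]
    exact zsq _ _ _ _ h36 (by decide)
  have h38 : (2 : ZMod 6164578258027337) ^ 188127998597 = 2875468076444464 := by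
    rw [show (188127998597:ℕ) = 2 * 94063999298 + 1 by norm_num]
    exact zsqm _ _ _ _ h37 (by decide)
  have h39 : (2 : ZMod 6164578258027337) ^ 376255997194 = 5354526528743866 := by
    rw [show (376255997194:ℕ) = 2 * 188127998597 by norm_num]
    exact zsq _ _ _ _ h38 (by decide)
  have h40 : (2 : ZMod 6164578258027337) ^ 752511994388 = 4831260794029564 := by
    rw [show (752511994388:ℕ) = 2 * 376255997194 by norm_num]
    exact zsq _ _ _ _ h39 (by decide)
  have h41 : (2 : ZMod 6164578258027337) ^ 1505023988776 = 312795119769408 := by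
    rw [show (1505023988776:ℕ) = 2 * 752511994388 by norm_num]
    exact zsq _ _ _ _ h40 (by decide)
  have h42 : (2 : ZMod 6164578258027337) ^ 3010047977552 = 4348618065043914 := by
    rw [show (3010047977552:ℕ) = 2 * 1505023988776 by norm_num]
    exact zsq _ _ _ _ h41 (by decide)
  have h43 : (2 : ZMod 6164578258027337) ^ 6020095955104 = 4315346571144569 := by
    rw [show (6020095955104:ℕ) = 2 * 3010047977552 by norm_num]
    exact zsq _ _ _ _ h42 (by decide)
  have h44 : (2 : ZMod 6164578258027337) ^ 12040191910209 = 3031192319977963 := by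
    rw [show (12040191910209:ℕ) = 2 * 6020095955104 + 1 by norm_num]
    exact zsqm _ _ _ _ h43 (by decide)
  have h45 : (2 : ZMod 6164578258027337) ^ 24080383820419 = 1359983003071650 := by
    rw [show (24080383820419:ℕ) = 2 * 12040191910209 + 1 by norm_num]
    exact zsqm _ _ _ _ h44 (by decide)
  have h46 : (2 : ZMod 6164578258027337) ^ 48160767640838 = 1429597782034895 := by
    rw [show (48160767640838:ℕ) = 2 * 24080383820419 by norm_num]
    exact zsq _ _ _ _ h45 (by decide)
  have h47 : (2 : ZMod 6164578258027337) ^ 96321535281677 = 3923126134782694 := by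
    rw [show (96321535281677:ℕ) = 2 * 48160767640838 + 1 by norm_num]
    exact zsqm _ _ _ _ h46 (by decide)
  have h48 : (2 : ZMod 6164578258027337) ^ 192643070563354 = 5776514510033407 := by
    rw [show (192643070563354:ℕ) = 2 * 96321535281677 by norm_num]
    exact zsq _ _ _ _ h47 (by decide)
  have h49 : (2 : ZMod 6164578258027337) ^ 385286141126708 = 4311208308948435 := by
    rw [show (385286141126708:ℕ) = 2 * 192643070563354 by norm_num]
    exact zsq _ _ _ _ h48 (by decide)
  have h50 : (2 : ZMod 6164578258027337) ^ 770572282253417 = 384642533 := by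
    rw [show (770572282253417:ℕ) = 2 * 385286141126708 + 1 by norm_num]
    exact zsqm _ _ _ _ h49 (by decide)
  have h51 : (2 : ZMod 6164578258027337) ^ 1541144564506834 = 1 := by
    rw [show (1541144564506834:ℕ) = 2 * 770572282253417 by norm_num]
    exact zsq _ _ _ _ h50 (by decide)
  have h52 : (2 : ZMod 6164578258027337) ^ 3082289129013668 = 1 := by
    rw [show (3082289129013668:ℕ) = 2 * 1541144564506834 by norm_num]
    exact zsq _ _ _ _ h51 (by decide)
  exact h52

private lemma chs : (78514828 : ZMod 6164578258027337) ^ 3082289129013668 = 6164578258027336 := by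
  have h1 : (78514828 : ZMod 6164578258027337) ^ 1 = 78514828 := pow_one _
  have h2 : (78514828 : ZMod 6164578258027337) ^ 2 = 6164578215869584 := by
    rw [pow_two]; decide
  have h3 : (78514828 : ZMod 6164578258027337) ^ 5 = 2553175326723444 := by
    rw [show (5:ℕ) = 2 * 2 + 1 by norm_num]
    exact zsqm _ _ _ _ h2 (by decide)
  have h4 : (78514828 : ZMod 6164578258027337) ^ 10 = 4275571051030371 := by
    rw [show (10:ℕ) = 2 * 5 by norm_num]
    exact zsq _ _ _ _ h3 (by decide)
  have h5 : (78514828 : ZMod 6164578258027337) ^ 21 = 1159560271941651 := by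
    rw [show (21:ℕ) = 2 * 10 + 1 by norm_num]
    exact zsqm _ _ _ _ h4 (by decide)
  have h6 : (78514828 : ZMod 6164578258027337) ^ 43 = 4442844896018906 := by
    rw [show (43:ℕ) = 2 * 21 + 1 by norm_num]
    exact zsqm _ _ _ _ h5 (by decide)
  have h7 : (78514828 : ZMod 6164578258027337) ^ 87 = 4254672137187179 := by
    rw [show (87:ℕ) = 2 * 43 + 1 by norm_num]
    exact zsqm _ _ _ _ h6 (by decide)
  have h8 : (78514828 : ZMod 6164578258027337) ^ 175 = 1679423403105821 := by
    rw [show (175:ℕ) = 2 * 87 + 1 by norm_num]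
    exact zsqm _ _ _ _ h7 (by decide)
  have h9 : (78514828 : ZMod 6164578258027337) ^ 350 = 4421873130177673 := by
    rw [show (350:ℕ) = 2 * 175 by norm_num]
    exact zsq _ _ _ _ h8 (by decide)
  have h10 : (78514828 : ZMod 6164578258027337) ^ 700 = 1669662483656472 := by
    rw [show (700:ℕ) = 2 * 350 by norm_num]
    exact zsq _ _ _ _ h9 (by decide)
  have h11 : (78514828 : ZMod 6164578258027337) ^ 1401 = 3363938906865148 := by
    rw [show (1401:ℕ) = 2 * 700 + 1 by norm_num]
    exact zsqm _ _ _ _ h10 (by decide)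
  have h12 : (78514828 : ZMod 6164578258027337) ^ 2803 = 2357859725077986 := by
    rw [show (2803:ℕ) = 2 * 1401 + 1 by norm_num]
    exact zsqm _ _ _ _ h11 (by decide)
  have h13 : (78514828 : ZMod 6164578258027337) ^ 5606 = 790568272009379 := by
    rw [show (5606:ℕ) = 2 * 2803 by norm_num]
    exact zsq _ _ _ _ h12 (by decide)
  have h14 : (78514828 : ZMod 6164578258027337) ^ 11213 = 710309312618266 := by
    rw [show (11213:ℕ) = 2 * 5606 + 1 by norm_num]
    exact zsqm _ _ _ _ h13 (by decide)
  have h15 : (78514828 : ZMod 6164578258027337) ^ 22426 = 3603665406065431 := by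
    rw [show (22426:ℕ) = 2 * 11213 by norm_num]
    exact zsq _ _ _ _ h14 (by decide)
  have h16 : (78514828 : ZMod 6164578258027337) ^ 44853 = 2073797243091236 := by
    rw [show (44853:ℕ) = 2 * 22426 + 1 by norm_num]
    exact zsqm _ _ _ _ h15 (by decide)
  have h17 : (78514828 : ZMod 6164578258027337) ^ 89706 = 3500605738042776 := by
    rw [show (89706:ℕ) = 2 * 44853 by norm_num]
    exact zsq _ _ _ _ h16 (by decide)
  have h18 : (78514828 : ZMod 6164578258027337) ^ 179412 = 5388905101099126 := by
    rw [show (179412:ℕ) = 2 * 89706 by norm_num]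
    exact zsq _ _ _ _ h17 (by decide)
  have h19 : (78514828 : ZMod 6164578258027337) ^ 358825 = 3883553726848186 := by
    rw [show (358825:ℕ) = 2 * 179412 + 1 by norm_num]
    exact zsqm _ _ _ _ h18 (by decide)
  have h20 : (78514828 : ZMod 6164578258027337) ^ 717651 = 5607207330261612 := by
    rw [show (717651:ℕ) = 2 * 358825 + 1 by norm_num]
    exact zsqm _ _ _ _ h19 (by decide)
  have h21 : (78514828 : ZMod 6164578258027337) ^ 1435302 = 5693970207185297 := by
    rw [show (1435302:ℕ) = 2 * 717651 by norm_num]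
    exact zsq _ _ _ _ h20 (by decide)
  have h22 : (78514828 : ZMod 6164578258027337) ^ 2870605 = 5733130299644156 := by
    rw [show (2870605:ℕ) = 2 * 1435302 + 1 by norm_num]
    exact zsqm _ _ _ _ h21 (by decide)
  have h23 : (78514828 : ZMod 6164578258027337) ^ 5741210 = 5854474385611862 := by
    rw [show (5741210:ℕ) = 2 * 2870605 by norm_num]
    exact zsq _ _ _ _ h22 (by decide)
  have h24 : (78514828 : ZMod 6164578258027337) ^ 11482421 = 2063433110210588 := by
    rw [show (11482421:ℕ) = 2 * 5741210 + 1 by norm_num]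
    exact zsqm _ _ _ _ h23 (by decide)
  have h25 : (78514828 : ZMod 6164578258027337) ^ 22964843 = 2101952760844185 := by
    rw [show (22964843:ℕ) = 2 * 11482421 + 1 by norm_num]
    exact zsqm _ _ _ _ h24 (by decide)
  have h26 : (78514828 : ZMod 6164578258027337) ^ 45929687 = 2089550962283668 := by
    rw [show (45929687:ℕ) = 2 * 22964843 + 1 by norm_num]
    exact zsqm _ _ _ _ h25 (by decide)
  have h27 : (78514828 : ZMod 6164578258027337) ^ 91859374 = 4069789418276200 := by
    rw [show (91859374:ℕ) = 2 * 45929687 by norm_num]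
    exact zsq _ _ _ _ h26 (by decide)
  have h28 : (78514828 : ZMod 6164578258027337) ^ 183718748 = 5517609161751123 := by
    rw [show (183718748:ℕ) = 2 * 91859374 by norm_num]
    exact zsq _ _ _ _ h27 (by decide)
  have h29 : (78514828 : ZMod 6164578258027337) ^ 367437497 = 3556954966983096 := by
    rw [show (367437497:ℕ) = 2 * 183718748 + 1 by norm_num]
    exact zsqm _ _ _ _ h28 (by decide)
  have h30 : (78514828 : ZMod 6164578258027337) ^ 734874994 = 915377005559011 := by
    rw [show (734874994:ℕ) = 2 * 367437497 by norm_num]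
    exact zsq _ _ _ _ h29 (by decide)
  have h31 : (78514828 : ZMod 6164578258027337) ^ 1469749989 = 3229664745256380 := by
    rw [show (1469749989:ℕ) = 2 * 734874994 + 1 by norm_num]
    exact zsqm _ _ _ _ h30 (by decide)
  have h32 : (78514828 : ZMod 6164578258027337) ^ 2939499978 = 4939586150491715 := by
    rw [show (2939499978:ℕ) = 2 * 1469749989 by norm_num]
    exact zsq _ _ _ _ h31 (by decide)
  have h33 : (78514828 : ZMod 6164578258027337) ^ 5878999956 = 4746737873487531 := by
    rw [show (5878999956:ℕ) = 2 * 2939499978 by norm_num]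
    exact zsq _ _ _ _ h32 (by decide)
  have h34 : (78514828 : ZMod 6164578258027337) ^ 11757999912 = 4819741892882550 := by
    rw [show (11757999912:ℕ) = 2 * 5878999956 by norm_num]
    exact zsq _ _ _ _ h33 (by decide)
  have h35 : (78514828 : ZMod 6164578258027337) ^ 23515999824 = 1233113525095133 := by
    rw [show (23515999824:ℕ) = 2 * 11757999912 by norm_num]
    exact zsq _ _ _ _ h34 (by decide)
  have h36 : (78514828 : ZMod 6164578258027337) ^ 47031999649 = 5512181250636559 := by
    rw [show (47031999649:ℕ) = 2 * 23515999824 + 1 by norm_num]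
    exact zsqm _ _ _ _ h35 (by decide)
  have h37 : (78514828 : ZMod 6164578258027337) ^ 94063999298 = 713203415760664 := by
    rw [show (94063999298:ℕ) = 2 * 47031999649 by norm_num]
    exact zsq _ _ _ _ h36 (by decide)
  have h38 : (78514828 : ZMod 6164578258027337) ^ 188127998597 = 4530931242367255 := by
    rw [show (188127998597:ℕ) = 2 * 94063999298 + 1 by norm_num]
    exact zsqm _ _ _ _ h37 (by decide)
  have h39 : (78514828 : ZMod 6164578258027337) ^ 376255997194 = 6112782062540585 := by
    rw [show (376255997194:ℕ) = 2 * 188127998597 by norm_num]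
    exact zsq _ _ _ _ h38 (by decide)
  have h40 : (78514828 : ZMod 6164578258027337) ^ 752511994388 = 1346840862650845 := by
    rw [show (752511994388:ℕ) = 2 * 376255997194 by norm_num]
    exact zsq _ _ _ _ h39 (by decide)
  have h41 : (78514828 : ZMod 6164578258027337) ^ 1505023988776 = 5172467113672662 := by
    rw [show (1505023988776:ℕ) = 2 * 752511994388 by norm_num]
    exact zsq _ _ _ _ h40 (by decide)
  have h42 : (78514828 : ZMod 6164578258027337) ^ 3010047977552 = 31731495345083 := by
    rw [show (3010047977552:ℕ) = 2 * 1505023988776 by norm_num]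
    exact zsq _ _ _ _ h41 (by decide)
  have h43 : (78514828 : ZMod 6164578258027337) ^ 6020095955104 = 4427182236291958 := by
    rw [show (6020095955104:ℕ) = 2 * 3010047977552 by norm_num]
    exact zsq _ _ _ _ h42 (by decide)
  have h44 : (78514828 : ZMod 6164578258027337) ^ 12040191910209 = 3962592243020328 := by
    rw [show (12040191910209:ℕ) = 2 * 6020095955104 + 1 by norm_num]
    exact zsqm _ _ _ _ h43 (by decide)
  have h45 : (78514828 : ZMod 6164578258027337) ^ 24080383820419 = 1974364654364459 := by
    rw [show (24080383820419:ℕ) = 2 * 12040191910209 + 1 by norm_num]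
    exact zsqm _ _ _ _ h44 (by decide)
  have h46 : (78514828 : ZMod 6164578258027337) ^ 48160767640838 = 4927342507929873 := by
    rw [show (48160767640838:ℕ) = 2 * 24080383820419 by norm_num]
    exact zsq _ _ _ _ h45 (by decide)
  have h47 : (78514828 : ZMod 6164578258027337) ^ 96321535281677 = 1271674197538246 := by
    rw [show (96321535281677:ℕ) = 2 * 48160767640838 + 1 by norm_num]
    exact zsqm _ _ _ _ h46 (by decide)
  have h48 : (78514828 : ZMod 6164578258027337) ^ 192643070563354 = 1004261065697870 := by
    rw [show (192643070563354:ℕ) = 2 * 96321535281677 by norm_num]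
    exact zsq _ _ _ _ h47 (by decide)
  have h49 : (78514828 : ZMod 6164578258027337) ^ 385286141126708 = 3924581528488590 := by
    rw [show (385286141126708:ℕ) = 2 * 192643070563354 by norm_num]
    exact zsq _ _ _ _ h48 (by decide)
  have h50 : (78514828 : ZMod 6164578258027337) ^ 770572282253417 = 5478233183673563 := by
    rw [show (770572282253417:ℕ) = 2 * 385286141126708 + 1 by norm_num]
    exact zsqm _ _ _ _ h49 (by decide)
  have h51 : (78514828 : ZMod 6164578258027337) ^ 1541144564506834 = 5377501257580934 := by
    rw [show (1541144564506834:ℕ) = 2 * 770572282253417 by norm_num]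
    exact zsq _ _ _ _ h50 (by decide)
  have h52 : (78514828 : ZMod 6164578258027337) ^ 3082289129013668 = 6164578258027336 := by
    rw [show (3082289129013668:ℕ) = 2 * 1541144564506834 by norm_num]
    exact zsq _ _ _ _ h51 (by decide)
  exact h52

private lemma chs1 : (78514829 : ZMod 6164578258027337) ^ 3082289129013668 = 1 := by
  have h1 : (78514829 : ZMod 6164578258027337) ^ 1 = 78514829 := pow_one _
  have h2 : (78514829 : ZMod 6164578258027337) ^ 2 = 114871904 := by
    rw [pow_two]; decide
  have h3 : (78514829 : ZMod 6164578258027337) ^ 5 = 2997781763259608 := by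
    rw [show (5:ℕ) = 2 * 2 + 1 by norm_num]
    exact zsqm _ _ _ _ h2 (by decide)
  have h4 : (78514829 : ZMod 6164578258027337) ^ 10 = 1946137567710262 := by
    rw [show (10:ℕ) = 2 * 5 by norm_num]
    exact zsq _ _ _ _ h3 (by decide)
  have h5 : (78514829 : ZMod 6164578258027337) ^ 21 = 3297471780180100 := by
    rw [show (21:ℕ) = 2 * 10 + 1 by norm_num]
    exact zsqm _ _ _ _ h4 (by decide)
  have h6 : (78514829 : ZMod 6164578258027337) ^ 43 = 941959121122030 := by
    rw [show (43:ℕ) = 2 * 21 + 1 by norm_num]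
    exact zsqm _ _ _ _ h5 (by decide)
  have h7 : (78514829 : ZMod 6164578258027337) ^ 87 = 5850412458528115 := by
    rw [show (87:ℕ) = 2 * 43 + 1 by norm_num]
    exact zsqm _ _ _ _ h6 (by decide)
  have h8 : (78514829 : ZMod 6164578258027337) ^ 175 = 5268431296585524 := by
    rw [show (175:ℕ) = 2 * 87 + 1 by norm_num]
    exact zsqm _ _ _ _ h7 (by decide)
  have h9 : (78514829 : ZMod 6164578258027337) ^ 350 = 3802763829364740 := by
    rw [show (350:ℕ) = 2 * 175 by norm_num]
    exact zsq _ _ _ _ h8 (by decide)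
  have h10 : (78514829 : ZMod 6164578258027337) ^ 700 = 2932753210168542 := by
    rw [show (700:ℕ) = 2 * 350 by norm_num]
    exact zsq _ _ _ _ h9 (by decide)
  have h11 : (78514829 : ZMod 6164578258027337) ^ 1401 = 4398179666761267 := by
    rw [show (1401:ℕ) = 2 * 700 + 1 by norm_num]
    exact zsqm _ _ _ _ h10 (by decide)
  have h12 : (78514829 : ZMod 6164578258027337) ^ 2803 = 689370830671872 := by
    rw [show (2803:ℕ) = 2 * 1401 + 1 by norm_num]
    exact zsqm _ _ _ _ h11 (by decide)
  have h13 : (78514829 : ZMod 6164578258027337) ^ 5606 = 4111573466634396 := by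
    rw [show (5606:ℕ) = 2 * 2803 by norm_num]
    exact zsq _ _ _ _ h12 (by decide)
  have h14 : (78514829 : ZMod 6164578258027337) ^ 11213 = 4793311686258725 := by
    rw [show (11213:ℕ) = 2 * 5606 + 1 by norm_num]
    exact zsqm _ _ _ _ h13 (by decide)
  have h15 : (78514829 : ZMod 6164578258027337) ^ 22426 = 4125942855214902 := by
    rw [show (22426:ℕ) = 2 * 11213 by norm_num]
    exact zsq _ _ _ _ h14 (by decide)
  have h16 : (78514829 : ZMod 6164578258027337) ^ 44853 = 333892967707754 := by
    rw [show (44853:ℕ) = 2 * 22426 + 1 by norm_num]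
    exact zsqm _ _ _ _ h15 (by decide)
  have h17 : (78514829 : ZMod 6164578258027337) ^ 89706 = 2221925980625068 := by
    rw [show (89706:ℕ) = 2 * 44853 by norm_num]
    exact zsq _ _ _ _ h16 (by decide)
  have h18 : (78514829 : ZMod 6164578258027337) ^ 179412 = 2161976305014355 := by
    rw [show (179412:ℕ) = 2 * 89706 by norm_num]
    exact zsq _ _ _ _ h17 (by decide)
  have h19 : (78514829 : ZMod 6164578258027337) ^ 358825 = 5735570751152040 := by
    rw [show (358825:ℕ) = 2 * 179412 + 1 by norm_num]
    exact zsqm _ _ _ _ h18 (by decide)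
  have h20 : (78514829 : ZMod 6164578258027337) ^ 717651 = 5991091837236612 := by
    rw [show (717651:ℕ) = 2 * 358825 + 1 by norm_num]
    exact zsqm _ _ _ _ h19 (by decide)
  have h21 : (78514829 : ZMod 6164578258027337) ^ 1435302 = 1659625308421127 := by
    rw [show (1435302:ℕ) = 2 * 717651 by norm_num]
    exact zsq _ _ _ _ h20 (by decide)
  have h22 : (78514829 : ZMod 6164578258027337) ^ 2870605 = 2829709827032221 := by
    rw [show (2870605:ℕ) = 2 * 1435302 + 1 by norm_num]
    exact zsqm _ _ _ _ h21 (by decide)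
  have h23 : (78514829 : ZMod 6164578258027337) ^ 5741210 = 1777617567641516 := by
    rw [show (5741210:ℕ) = 2 * 2870605 by norm_num]
    exact zsq _ _ _ _ h22 (by decide)
  have h24 : (78514829 : ZMod 6164578258027337) ^ 11482421 = 5255476951037752 := by
    rw [show (11482421:ℕ) = 2 * 5741210 + 1 by norm_num]
    exact zsqm _ _ _ _ h23 (by decide)
  have h25 : (78514829 : ZMod 6164578258027337) ^ 22964843 = 87096590087355 := by
    rw [show (22964843:ℕ) = 2 * 11482421 + 1 by norm_num]
    exact zsqm _ _ _ _ h24 (by decide)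
  have h26 : (78514829 : ZMod 6164578258027337) ^ 45929687 = 4533772387238321 := by
    rw [show (45929687:ℕ) = 2 * 22964843 + 1 by norm_num]
    exact zsqm _ _ _ _ h25 (by decide)
  have h27 : (78514829 : ZMod 6164578258027337) ^ 91859374 = 2881215289570619 := by
    rw [show (91859374:ℕ) = 2 * 45929687 by norm_num]
    exact zsq _ _ _ _ h26 (by decide)
  have h28 : (78514829 : ZMod 6164578258027337) ^ 183718748 = 4870226658129792 := by
    rw [show (183718748:ℕ) = 2 * 91859374 by norm_num]
    exact zsq _ _ _ _ h27 (by decide)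
  have h29 : (78514829 : ZMod 6164578258027337) ^ 367437497 = 1918855834139871 := by
    rw [show (367437497:ℕ) = 2 * 183718748 + 1 by norm_num]
    exact zsqm _ _ _ _ h28 (by decide)
  have h30 : (78514829 : ZMod 6164578258027337) ^ 734874994 = 5059912453564646 := by
    rw [show (734874994:ℕ) = 2 * 367437497 by norm_num]
    exact zsq _ _ _ _ h29 (by decide)
  have h31 : (78514829 : ZMod 6164578258027337) ^ 1469749989 = 1058103094229652 := by
    rw [show (1469749989:ℕ) = 2 * 734874994 + 1 by norm_num]
    exact zsqm _ _ _ _ h30 (by decide)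
  have h32 : (78514829 : ZMod 6164578258027337) ^ 2939499978 = 176738734580083 := by
    rw [show (2939499978:ℕ) = 2 * 1469749989 by norm_num]
    exact zsq _ _ _ _ h31 (by decide)
  have h33 : (78514829 : ZMod 6164578258027337) ^ 5878999956 = 4086879793786786 := by
    rw [show (5878999956:ℕ) = 2 * 2939499978 by norm_num]
    exact zsq _ _ _ _ h32 (by decide)
  have h34 : (78514829 : ZMod 6164578258027337) ^ 11757999912 = 3259720421931664 := by
    rw [show (11757999912:ℕ) = 2 * 5878999956 by norm_num]
    exact zsq _ _ _ _ h33 (by decide)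
  have h35 : (78514829 : ZMod 6164578258027337) ^ 23515999824 = 930708251546195 := by
    rw [show (23515999824:ℕ) = 2 * 11757999912 by norm_num]
    exact zsq _ _ _ _ h34 (by decide)
  have h36 : (78514829 : ZMod 6164578258027337) ^ 47031999649 = 5164021940723292 := by
    rw [show (47031999649:ℕ) = 2 * 23515999824 + 1 by norm_num]
    exact zsqm _ _ _ _ h35 (by decide)
  have h37 : (78514829 : ZMod 6164578258027337) ^ 94063999298 = 370979585046780 := by
    rw [show (94063999298:ℕ) = 2 * 47031999649 by norm_num]
    exact zsq _ _ _ _ h36 (by decide)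
  have h38 : (78514829 : ZMod 6164578258027337) ^ 188127998597 = 1942657912875640 := by
    rw [show (188127998597:ℕ) = 2 * 94063999298 + 1 by norm_num]
    exact zsqm _ _ _ _ h37 (by decide)
  have h39 : (78514829 : ZMod 6164578258027337) ^ 376255997194 = 55276157193882 := by
    rw [show (376255997194:ℕ) = 2 * 188127998597 by norm_num]
    exact zsq _ _ _ _ h38 (by decide)
  have h40 : (78514829 : ZMod 6164578258027337) ^ 752511994388 = 355027984711298 := by
    rw [show (752511994388:ℕ) = 2 * 376255997194 by norm_num]
    exact zsq _ _ _ _ h39 (by decide)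
  have h41 : (78514829 : ZMod 6164578258027337) ^ 1505023988776 = 1618855647541810 := by
    rw [show (1505023988776:ℕ) = 2 * 752511994388 by norm_num]
    exact zsq _ _ _ _ h40 (by decide)
  have h42 : (78514829 : ZMod 6164578258027337) ^ 3010047977552 = 3693741411599337 := by
    rw [show (3010047977552:ℕ) = 2 * 1505023988776 by norm_num]
    exact zsq _ _ _ _ h41 (by decide)
  have h43 : (78514829 : ZMod 6164578258027337) ^ 6020095955104 = 471546270614075 := by
    rw [show (6020095955104:ℕ) = 2 * 3010047977552 by norm_num]
    exact zsq _ _ _ _ h42 (by decide)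
  have h44 : (78514829 : ZMod 6164578258027337) ^ 12040191910209 = 1561246747817163 := by
    rw [show (12040191910209:ℕ) = 2 * 6020095955104 + 1 by norm_num]
    exact zsqm _ _ _ _ h43 (by decide)
  have h45 : (78514829 : ZMod 6164578258027337) ^ 24080383820419 = 4068555308446646 := by
    rw [show (24080383820419:ℕ) = 2 * 12040191910209 + 1 by norm_num]
    exact zsqm _ _ _ _ h44 (by decide)
  have h46 : (78514829 : ZMod 6164578258027337) ^ 48160767640838 = 1903095415763639 := by
    rw [show (48160767640838:ℕ) = 2 * 24080383820419 by norm_num]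
    exact zsq _ _ _ _ h45 (by decide)
  have h47 : (78514829 : ZMod 6164578258027337) ^ 96321535281677 = 4390436953332317 := by
    rw [show (96321535281677:ℕ) = 2 * 48160767640838 + 1 by norm_num]
    exact zsqm _ _ _ _ h46 (by decide)
  have h48 : (78514829 : ZMod 6164578258027337) ^ 192643070563354 = 4688363422894291 := by
    rw [show (192643070563354:ℕ) = 2 * 96321535281677 by norm_num]
    exact zsq _ _ _ _ h47 (by decide)
  have h49 : (78514829 : ZMod 6164578258027337) ^ 385286141126708 = 4842689765939294 := by
    rw [show (385286141126708:ℕ) = 2 * 192643070563354 by norm_num]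
    exact zsq _ _ _ _ h48 (by decide)
  have h50 : (78514829 : ZMod 6164578258027337) ^ 770572282253417 = 683573533863678 := by
    rw [show (770572282253417:ℕ) = 2 * 385286141126708 + 1 by norm_num]
    exact zsqm _ _ _ _ h49 (by decide)
  have h51 : (78514829 : ZMod 6164578258027337) ^ 1541144564506834 = 384642533 := by
    rw [show (1541144564506834:ℕ) = 2 * 770572282253417 by norm_num]
    exact zsq _ _ _ _ h50 (by decide)
  have h52 : (78514829 : ZMod 6164578258027337) ^ 3082289129013668 = 1 := by
    rw [show (3082289129013668:ℕ) = 2 * 1541144564506834 by norm_num]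
    exact zsq _ _ _ _ h51 (by decide)
  exact h52

private lemma cht : (55518367 : ZMod 6164578258027337) ^ 3082289129013668 = 1 := by
  have h1 : (55518367 : ZMod 6164578258027337) ^ 1 = 55518367 := pow_one _
  have h2 : (55518367 : ZMod 6164578258027337) ^ 2 = 3082289074346689 := by
    rw [pow_two]; decide
  have h3 : (55518367 : ZMod 6164578258027337) ^ 5 = 5477905747903715 := by
    rw [show (5:ℕ) = 2 * 2 + 1 by norm_num]
    exact zsqm _ _ _ _ h2 (by decide)
  have h4 : (55518367 : ZMod 6164578258027337) ^ 10 = 4467759502437949 := by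
    rw [show (10:ℕ) = 2 * 5 by norm_num]
    exact zsq _ _ _ _ h3 (by decide)
  have h5 : (55518367 : ZMod 6164578258027337) ^ 21 = 1692091164016287 := by
    rw [show (21:ℕ) = 2 * 10 + 1 by norm_num]
    exact zsqm _ _ _ _ h4 (by decide)
  have h6 : (55518367 : ZMod 6164578258027337) ^ 43 = 805350096423361 := by
    rw [show (43:ℕ) = 2 * 21 + 1 by norm_num]
    exact zsqm _ _ _ _ h5 (by decide)
  have h7 : (55518367 : ZMod 6164578258027337) ^ 87 = 571038128707005 := by
    rw [show (87:ℕ) = 2 * 43 + 1 by norm_num]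
    exact zsqm _ _ _ _ h6 (by decide)
  have h8 : (55518367 : ZMod 6164578258027337) ^ 175 = 3004819702325867 := by
    rw [show (175:ℕ) = 2 * 87 + 1 by norm_num]
    exact zsqm _ _ _ _ h7 (by decide)
  have h9 : (55518367 : ZMod 6164578258027337) ^ 350 = 2923983012229501 := by
    rw [show (350:ℕ) = 2 * 175 by norm_num]
    exact zsq _ _ _ _ h8 (by decide)
  have h10 : (55518367 : ZMod 6164578258027337) ^ 700 = 2709610499524156 := by
    rw [show (700:ℕ) = 2 * 350 by norm_num]
    exact zsq _ _ _ _ h9 (by decide)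
  have h11 : (55518367 : ZMod 6164578258027337) ^ 1401 = 1278994250466465 := by
    rw [show (1401:ℕ) = 2 * 700 + 1 by norm_num]
    exact zsqm _ _ _ _ h10 (by decide)
  have h12 : (55518367 : ZMod 6164578258027337) ^ 2803 = 2260123657801369 := by
    rw [show (2803:ℕ) = 2 * 1401 + 1 by norm_num]
    exact zsqm _ _ _ _ h11 (by decide)
  have h13 : (55518367 : ZMod 6164578258027337) ^ 5606 = 1618529616981027 := by
    rw [show (5606:ℕ) = 2 * 2803 by norm_num]
    exact zsq _ _ _ _ h12 (by decide)
  have h14 : (55518367 : ZMod 6164578258027337) ^ 11213 = 4690665590876994 := by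
    rw [show (11213:ℕ) = 2 * 5606 + 1 by norm_num]
    exact zsqm _ _ _ _ h13 (by decide)
  have h15 : (55518367 : ZMod 6164578258027337) ^ 22426 = 6069281577223696 := by
    rw [show (22426:ℕ) = 2 * 11213 by norm_num]
    exact zsq _ _ _ _ h14 (by decide)
  have h16 : (55518367 : ZMod 6164578258027337) ^ 44853 = 3084525956176194 := by
    rw [show (44853:ℕ) = 2 * 22426 + 1 by norm_num]
    exact zsqm _ _ _ _ h15 (by decide)
  have h17 : (55518367 : ZMod 6164578258027337) ^ 89706 = 6152695088350062 := by
    rw [show (89706:ℕ) = 2 * 44853 by norm_num]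
    exact zsq _ _ _ _ h16 (by decide)
  have h18 : (55518367 : ZMod 6164578258027337) ^ 179412 = 215219028238012 := by
    rw [show (179412:ℕ) = 2 * 89706 by norm_num]
    exact zsq _ _ _ _ h17 (by decide)
  have h19 : (55518367 : ZMod 6164578258027337) ^ 358825 = 929632099957608 := by
    rw [show (358825:ℕ) = 2 * 179412 + 1 by norm_num]
    exact zsqm _ _ _ _ h18 (by decide)
  have h20 : (55518367 : ZMod 6164578258027337) ^ 717651 = 1757731589440261 := by
    rw [show (717651:ℕ) = 2 * 358825 + 1 by norm_num]
    exact zsqm _ _ _ _ h19 (by decide)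
  have h21 : (55518367 : ZMod 6164578258027337) ^ 1435302 = 9837772913981 := by
    rw [show (1435302:ℕ) = 2 * 717651 by norm_num]
    exact zsq _ _ _ _ h20 (by decide)
  have h22 : (55518367 : ZMod 6164578258027337) ^ 2870605 = 2771934424202250 := by
    rw [show (2870605:ℕ) = 2 * 1435302 + 1 by norm_num]
    exact zsqm _ _ _ _ h21 (by decide)
  have h23 : (55518367 : ZMod 6164578258027337) ^ 5741210 = 1522386266796994 := by
    rw [show (5741210:ℕ) = 2 * 2870605 by norm_num]
    exact zsq _ _ _ _ h22 (by decide)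
  have h24 : (55518367 : ZMod 6164578258027337) ^ 11482421 = 3538440430188046 := by
    rw [show (11482421:ℕ) = 2 * 5741210 + 1 by norm_num]
    exact zsqm _ _ _ _ h23 (by decide)
  have h25 : (55518367 : ZMod 6164578258027337) ^ 22964843 = 354824266079549 := by
    rw [show (22964843:ℕ) = 2 * 11482421 + 1 by norm_num]
    exact zsqm _ _ _ _ h24 (by decide)
  have h26 : (55518367 : ZMod 6164578258027337) ^ 45929687 = 4863911453757081 := by
    rw [show (45929687:ℕ) = 2 * 22964843 + 1 by norm_num]
    exact zsqm _ _ _ _ h25 (by decide)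
  have h27 : (55518367 : ZMod 6164578258027337) ^ 91859374 = 3019414685798902 := by
    rw [show (91859374:ℕ) = 2 * 45929687 by norm_num]
    exact zsq _ _ _ _ h26 (by decide)
  have h28 : (55518367 : ZMod 6164578258027337) ^ 183718748 = 4874392368338664 := by
    rw [show (183718748:ℕ) = 2 * 91859374 by norm_num]
    exact zsq _ _ _ _ h27 (by decide)
  have h29 : (55518367 : ZMod 6164578258027337) ^ 367437497 = 900730469694368 := by
    rw [show (367437497:ℕ) = 2 * 183718748 + 1 by norm_num]
    exact zsqm _ _ _ _ h28 (by decide)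
  have h30 : (55518367 : ZMod 6164578258027337) ^ 734874994 = 2492866343991102 := by
    rw [show (734874994:ℕ) = 2 * 367437497 by norm_num]
    exact zsq _ _ _ _ h29 (by decide)
  have h31 : (55518367 : ZMod 6164578258027337) ^ 1469749989 = 2577627532952830 := by
    rw [show (1469749989:ℕ) = 2 * 734874994 + 1 by norm_num]
    exact zsqm _ _ _ _ h30 (by decide)
  have h32 : (55518367 : ZMod 6164578258027337) ^ 2939499978 = 5226115836490773 := by
    rw [show (2939499978:ℕ) = 2 * 1469749989 by norm_num]
    exact zsq _ _ _ _ h31 (by decide)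
  have h33 : (55518367 : ZMod 6164578258027337) ^ 5878999956 = 5092526647192001 := by
    rw [show (5878999956:ℕ) = 2 * 2939499978 by norm_num]
    exact zsq _ _ _ _ h32 (by decide)
  have h34 : (55518367 : ZMod 6164578258027337) ^ 11757999912 = 1960658105576850 := by
    rw [show (11757999912:ℕ) = 2 * 5878999956 by norm_num]
    exact zsq _ _ _ _ h33 (by decide)
  have h35 : (55518367 : ZMod 6164578258027337) ^ 23515999824 = 5332748478101114 := by
    rw [show (23515999824:ℕ) = 2 * 11757999912 by norm_num]
    exact zsq _ _ _ _ h34 (by decide)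
  have h36 : (55518367 : ZMod 6164578258027337) ^ 47031999649 = 2136349120167439 := by
    rw [show (47031999649:ℕ) = 2 * 23515999824 + 1 by norm_num]
    exact zsqm _ _ _ _ h35 (by decide)
  have h37 : (55518367 : ZMod 6164578258027337) ^ 94063999298 = 1076924591242119 := by
    rw [show (94063999298:ℕ) = 2 * 47031999649 by norm_num]
    exact zsq _ _ _ _ h36 (by decide)
  have h38 : (55518367 : ZMod 6164578258027337) ^ 188127998597 = 1482532293145891 := by
    rw [show (188127998597:ℕ) = 2 * 94063999298 + 1 by norm_num]
    exact zsqm _ _ _ _ h37 (by decide)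
  have h39 : (55518367 : ZMod 6164578258027337) ^ 376255997194 = 3183382344257565 := by
    rw [show (376255997194:ℕ) = 2 * 188127998597 by norm_num]
    exact zsq _ _ _ _ h38 (by decide)
  have h40 : (55518367 : ZMod 6164578258027337) ^ 752511994388 = 3515199489141756 := by
    rw [show (752511994388:ℕ) = 2 * 376255997194 by norm_num]
    exact zsq _ _ _ _ h39 (by decide)
  have h41 : (55518367 : ZMod 6164578258027337) ^ 1505023988776 = 5756983306092558 := by
    rw [show (1505023988776:ℕ) = 2 * 752511994388 by norm_num]
    exact zsq _ _ _ _ h40 (by decide)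
  have h42 : (55518367 : ZMod 6164578258027337) ^ 3010047977552 = 4294896065656712 := by
    rw [show (3010047977552:ℕ) = 2 * 1505023988776 by norm_num]
    exact zsq _ _ _ _ h41 (by decide)
  have h43 : (55518367 : ZMod 6164578258027337) ^ 6020095955104 = 528281519999774 := by
    rw [show (6020095955104:ℕ) = 2 * 3010047977552 by norm_num]
    exact zsq _ _ _ _ h42 (by decide)
  have h44 : (55518367 : ZMod 6164578258027337) ^ 12040191910209 = 4022059954530297 := by
    rw [show (12040191910209:ℕ) = 2 * 6020095955104 + 1 by norm_num]
    exact zsqm _ _ _ _ h43 (by decide)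
  have h45 : (55518367 : ZMod 6164578258027337) ^ 24080383820419 = 5138432443634605 := by
    rw [show (24080383820419:ℕ) = 2 * 12040191910209 + 1 by norm_num]
    exact zsqm _ _ _ _ h44 (by decide)
  have h46 : (55518367 : ZMod 6164578258027337) ^ 48160767640838 = 1526918758041696 := by
    rw [show (48160767640838:ℕ) = 2 * 24080383820419 by norm_num]
    exact zsq _ _ _ _ h45 (by decide)
  have h47 : (55518367 : ZMod 6164578258027337) ^ 96321535281677 = 3087974103680048 := by
    rw [show (96321535281677:ℕ) = 2 * 48160767640838 + 1 by norm_num]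
    exact zsqm _ _ _ _ h46 (by decide)
  have h48 : (55518367 : ZMod 6164578258027337) ^ 192643070563354 = 2951637259511167 := by
    rw [show (192643070563354:ℕ) = 2 * 96321535281677 by norm_num]
    exact zsq _ _ _ _ h47 (by decide)
  have h49 : (55518367 : ZMod 6164578258027337) ^ 385286141126708 = 3869168811018430 := by
    rw [show (385286141126708:ℕ) = 2 * 192643070563354 by norm_num]
    exact zsq _ _ _ _ h48 (by decide)
  have h50 : (55518367 : ZMod 6164578258027337) ^ 770572282253417 = 384642533 := by
    rw [show (770572282253417:ℕ) = 2 * 385286141126708 + 1 by norm_num]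
    exact zsqm _ _ _ _ h49 (by decide)
  have h51 : (55518367 : ZMod 6164578258027337) ^ 1541144564506834 = 1 := by
    rw [show (1541144564506834:ℕ) = 2 * 770572282253417 by norm_num]
    exact zsq _ _ _ _ h50 (by decide)
  have h52 : (55518367 : ZMod 6164578258027337) ^ 3082289129013668 = 1 := by
    rw [show (3082289129013668:ℕ) = 2 * 1541144564506834 by norm_num]
    exact zsq _ _ _ _ h51 (by decide)
  exact h52

private lemma cht1 : (55518368 : ZMod 6164578258027337) ^ 3082289129013668 = 6164578258027336 := by
  have h1 : (55518368 : ZMod 6164578258027337) ^ 1 = 55518368 := pow_one _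
  have h2 : (55518368 : ZMod 6164578258027337) ^ 2 = 3082289185383424 := by
    rw [pow_two]; decide
  have h3 : (55518368 : ZMod 6164578258027337) ^ 5 = 858096362015932 := by
    rw [show (5:ℕ) = 2 * 2 + 1 by norm_num]
    exact zsqm _ _ _ _ h2 (by decide)
  have h4 : (55518368 : ZMod 6164578258027337) ^ 10 = 1220411413928581 := by
    rw [show (10:ℕ) = 2 * 5 by norm_num]
    exact zsq _ _ _ _ h3 (by decide)
  have h5 : (55518368 : ZMod 6164578258027337) ^ 21 = 5646097909216447 := by
    rw [show (21:ℕ) = 2 * 10 + 1 by norm_num]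
    exact zsqm _ _ _ _ h4 (by decide)
  have h6 : (55518368 : ZMod 6164578258027337) ^ 43 = 4912095113949621 := by
    rw [show (43:ℕ) = 2 * 21 + 1 by norm_num]
    exact zsqm _ _ _ _ h5 (by decide)
  have h7 : (55518368 : ZMod 6164578258027337) ^ 87 = 5477478815749452 := by
    rw [show (87:ℕ) = 2 * 43 + 1 by norm_num]
    exact zsqm _ _ _ _ h6 (by decide)
  have h8 : (55518368 : ZMod 6164578258027337) ^ 175 = 3474657170981472 := by
    rw [show (175:ℕ) = 2 * 87 + 1 by norm_num]
    exact zsqm _ _ _ _ h7 (by decide)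
  have h9 : (55518368 : ZMod 6164578258027337) ^ 350 = 2100133136431461 := by
    rw [show (350:ℕ) = 2 * 175 by norm_num]
    exact zsq _ _ _ _ h8 (by decide)
  have h10 : (55518368 : ZMod 6164578258027337) ^ 700 = 5099975218217646 := by
    rw [show (700:ℕ) = 2 * 350 by norm_num]
    exact zsq _ _ _ _ h9 (by decide)
  have h11 : (55518368 : ZMod 6164578258027337) ^ 1401 = 5591155117789475 := by
    rw [show (1401:ℕ) = 2 * 700 + 1 by norm_num]
    exact zsqm _ _ _ _ h10 (by decide)
  have h12 : (55518368 : ZMod 6164578258027337) ^ 2803 = 5728227502608175 := by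
    rw [show (2803:ℕ) = 2 * 1401 + 1 by norm_num]
    exact zsqm _ _ _ _ h11 (by decide)
  have h13 : (55518368 : ZMod 6164578258027337) ^ 5606 = 4175662822959561 := by
    rw [show (5606:ℕ) = 2 * 2803 by norm_num]
    exact zsq _ _ _ _ h12 (by decide)
  have h14 : (55518368 : ZMod 6164578258027337) ^ 11213 = 2315373424091221 := by
    rw [show (11213:ℕ) = 2 * 5606 + 1 by norm_num]
    exact zsqm _ _ _ _ h13 (by decide)
  have h15 : (55518368 : ZMod 6164578258027337) ^ 22426 = 4452286479965997 := by
    rw [show (22426:ℕ) = 2 * 11213 by norm_num]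
    exact zsq _ _ _ _ h14 (by decide)
  have h16 : (55518368 : ZMod 6164578258027337) ^ 44853 = 4137225044113806 := by
    rw [show (44853:ℕ) = 2 * 22426 + 1 by norm_num]
    exact zsqm _ _ _ _ h15 (by decide)
  have h17 : (55518368 : ZMod 6164578258027337) ^ 89706 = 1471843829916754 := by
    rw [show (89706:ℕ) = 2 * 44853 by norm_num]
    exact zsq _ _ _ _ h16 (by decide)
  have h18 : (55518368 : ZMod 6164578258027337) ^ 179412 = 4236498532277394 := by
    rw [show (179412:ℕ) = 2 * 89706 by norm_num]
    exact zsq _ _ _ _ h17 (by decide)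
  have h19 : (55518368 : ZMod 6164578258027337) ^ 358825 = 6046067098857239 := by
    rw [show (358825:ℕ) = 2 * 179412 + 1 by norm_num]
    exact zsqm _ _ _ _ h18 (by decide)
  have h20 : (55518368 : ZMod 6164578258027337) ^ 717651 = 2226834153830479 := by
    rw [show (717651:ℕ) = 2 * 358825 + 1 by norm_num]
    exact zsqm _ _ _ _ h19 (by decide)
  have h21 : (55518368 : ZMod 6164578258027337) ^ 1435302 = 2343402485458960 := by
    rw [show (1435302:ℕ) = 2 * 717651 by norm_num]
    exact zsq _ _ _ _ h20 (by decide)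
  have h22 : (55518368 : ZMod 6164578258027337) ^ 2870605 = 5152158259824041 := by
    rw [show (2870605:ℕ) = 2 * 1435302 + 1 by norm_num]
    exact zsqm _ _ _ _ h21 (by decide)
  have h23 : (55518368 : ZMod 6164578258027337) ^ 5741210 = 2166459270990943 := by
    rw [show (5741210:ℕ) = 2 * 2870605 by norm_num]
    exact zsq _ _ _ _ h22 (by decide)
  have h24 : (55518368 : ZMod 6164578258027337) ^ 11482421 = 5680709634517983 := by
    rw [show (11482421:ℕ) = 2 * 5741210 + 1 by norm_num]
    exact zsqm _ _ _ _ h23 (by decide)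
  have h25 : (55518368 : ZMod 6164578258027337) ^ 22964843 = 4873503488902294 := by
    rw [show (22964843:ℕ) = 2 * 11482421 + 1 by norm_num]
    exact zsqm _ _ _ _ h24 (by decide)
  have h26 : (55518368 : ZMod 6164578258027337) ^ 45929687 = 4686042566888522 := by
    rw [show (45929687:ℕ) = 2 * 22964843 + 1 by norm_num]
    exact zsqm _ _ _ _ h25 (by decide)
  have h27 : (55518368 : ZMod 6164578258027337) ^ 91859374 = 2458443590281878 := by
    rw [show (91859374:ℕ) = 2 * 45929687 by norm_num]
    exact zsq _ _ _ _ h26 (by decide)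
  have h28 : (55518368 : ZMod 6164578258027337) ^ 183718748 = 3540890632541939 := by
    rw [show (183718748:ℕ) = 2 * 91859374 by norm_num]
    exact zsq _ _ _ _ h27 (by decide)
  have h29 : (55518368 : ZMod 6164578258027337) ^ 367437497 = 5691290895845227 := by
    rw [show (367437497:ℕ) = 2 * 183718748 + 1 by norm_num]
    exact zsqm _ _ _ _ h28 (by decide)
  have h30 : (55518368 : ZMod 6164578258027337) ^ 734874994 = 2048875847021050 := by
    rw [show (734874994:ℕ) = 2 * 367437497 by norm_num]
    exact zsq _ _ _ _ h29 (by decide)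
  have h31 : (55518368 : ZMod 6164578258027337) ^ 1469749989 = 3076395081550008 := by
    rw [show (1469749989:ℕ) = 2 * 734874994 + 1 by norm_num]
    exact zsqm _ _ _ _ h30 (by decide)
  have h32 : (55518368 : ZMod 6164578258027337) ^ 2939499978 = 2241467932915357 := by
    rw [show (2939499978:ℕ) = 2 * 1469749989 by norm_num]
    exact zsq _ _ _ _ h31 (by decide)
  have h33 : (55518368 : ZMod 6164578258027337) ^ 5878999956 = 2917805462020389 := by
    rw [show (5878999956:ℕ) = 2 * 2939499978 by norm_num]
    exact zsq _ _ _ _ h32 (by decide)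
  have h34 : (55518368 : ZMod 6164578258027337) ^ 11757999912 = 5741701037884204 := by
    rw [show (11757999912:ℕ) = 2 * 5878999956 by norm_num]
    exact zsq _ _ _ _ h33 (by decide)
  have h35 : (55518368 : ZMod 6164578258027337) ^ 23515999824 = 2260700073927699 := by
    rw [show (23515999824:ℕ) = 2 * 11757999912 by norm_num]
    exact zsq _ _ _ _ h34 (by decide)
  have h36 : (55518368 : ZMod 6164578258027337) ^ 47031999649 = 5263961015030741 := by
    rw [show (47031999649:ℕ) = 2 * 23515999824 + 1 by norm_num]
    exact zsqm _ _ _ _ h35 (by decide)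
  have h37 : (55518368 : ZMod 6164578258027337) ^ 94063999298 = 515967986442009 := by
    rw [show (94063999298:ℕ) = 2 * 47031999649 by norm_num]
    exact zsq _ _ _ _ h36 (by decide)
  have h38 : (55518368 : ZMod 6164578258027337) ^ 188127998597 = 1225372551923435 := by
    rw [show (188127998597:ℕ) = 2 * 94063999298 + 1 by norm_num]
    exact zsqm _ _ _ _ h37 (by decide)
  have h39 : (55518368 : ZMod 6164578258027337) ^ 376255997194 = 1187616305723236 := by
    rw [show (376255997194:ℕ) = 2 * 188127998597 by norm_num]
    exact zsq _ _ _ _ h38 (by decide)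
  have h40 : (55518368 : ZMod 6164578258027337) ^ 752511994388 = 2907626492088883 := by
    rw [show (752511994388:ℕ) = 2 * 376255997194 by norm_num]
    exact zsq _ _ _ _ h39 (by decide)
  have h41 : (55518368 : ZMod 6164578258027337) ^ 1505023988776 = 5983923154902400 := by
    rw [show (1505023988776:ℕ) = 2 * 752511994388 by norm_num]
    exact zsq _ _ _ _ h40 (by decide)
  have h42 : (55518368 : ZMod 6164578258027337) ^ 3010047977552 = 3749190269531714 := by
    rw [show (3010047977552:ℕ) = 2 * 1505023988776 by norm_num]
    exact zsq _ _ _ _ h41 (by decide)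
  have h43 : (55518368 : ZMod 6164578258027337) ^ 6020095955104 = 425818092963265 := by
    rw [show (6020095955104:ℕ) = 2 * 3010047977552 by norm_num]
    exact zsq _ _ _ _ h42 (by decide)
  have h44 : (55518368 : ZMod 6164578258027337) ^ 12040191910209 = 3811475361752824 := by
    rw [show (12040191910209:ℕ) = 2 * 6020095955104 + 1 by norm_num]
    exact zsqm _ _ _ _ h43 (by decide)
  have h45 : (55518368 : ZMod 6164578258027337) ^ 24080383820419 = 3743825042090691 := by
    rw [show (24080383820419:ℕ) = 2 * 12040191910209 + 1 by norm_num]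
    exact zsqm _ _ _ _ h44 (by decide)
  have h46 : (55518368 : ZMod 6164578258027337) ^ 48160767640838 = 2861346158848784 := by
    rw [show (48160767640838:ℕ) = 2 * 24080383820419 by norm_num]
    exact zsq _ _ _ _ h45 (by decide)
  have h47 : (55518368 : ZMod 6164578258027337) ^ 96321535281677 = 3044136031441458 := by
    rw [show (96321535281677:ℕ) = 2 * 48160767640838 + 1 by norm_num]
    exact zsqm _ _ _ _ h46 (by decide)
  have h48 : (55518368 : ZMod 6164578258027337) ^ 192643070563354 = 4637474131461058 := by
    rw [show (192643070563354:ℕ) = 2 * 96321535281677 by norm_num]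
    exact zsq _ _ _ _ h47 (by decide)
  have h49 : (55518368 : ZMod 6164578258027337) ^ 385286141126708 = 4410496931781532 := by
    rw [show (385286141126708:ℕ) = 2 * 192643070563354 by norm_num]
    exact zsq _ _ _ _ h48 (by decide)
  have h50 : (55518368 : ZMod 6164578258027337) ^ 770572282253417 = 360579777275476 := by
    rw [show (770572282253417:ℕ) = 2 * 385286141126708 + 1 by norm_num]
    exact zsqm _ _ _ _ h49 (by decide)
  have h51 : (55518368 : ZMod 6164578258027337) ^ 1541144564506834 = 4010353805211044 := by
    rw [show (1541144564506834:ℕ) = 2 * 770572282253417 by norm_num]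
    exact zsq _ _ _ _ h50 (by decide)
  have h52 : (55518368 : ZMod 6164578258027337) ^ 3082289129013668 = 6164578258027336 := by
    rw [show (3082289129013668:ℕ) = 2 * 1541144564506834 by norm_num]
    exact zsq _ _ _ _ h51 (by decide)
  exact h52

private lemma ch5 : (5 : ZMod 6164578258027337) ^ 3082289129013668 = 6164578258027336 := by
  have h1 : (5 : ZMod 6164578258027337) ^ 1 = 5 := pow_one _
  have h2 : (5 : ZMod 6164578258027337) ^ 2 = 25 := by
    rw [pow_two]; decide
  have h3 : (5 : ZMod 6164578258027337) ^ 5 = 3125 := by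
    rw [show (5:ℕ) = 2 * 2 + 1 by norm_num]
    exact zsqm _ _ _ _ h2 (by decide)
  have h4 : (5 : ZMod 6164578258027337) ^ 10 = 9765625 := by
    rw [show (10:ℕ) = 2 * 5 by norm_num]
    exact zsq _ _ _ _ h3 (by decide)
  have h5 : (5 : ZMod 6164578258027337) ^ 21 = 476837158203125 := by
    rw [show (21:ℕ) = 2 * 10 + 1 by norm_num]
    exact zsqm _ _ _ _ h4 (by decide)
  have h6 : (5 : ZMod 6164578258027337) ^ 43 = 1958084143125842 := by
    rw [show (43:ℕ) = 2 * 21 + 1 by norm_num]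
    exact zsqm _ _ _ _ h5 (by decide)
  have h7 : (5 : ZMod 6164578258027337) ^ 87 = 2401272243593759 := by
    rw [show (87:ℕ) = 2 * 43 + 1 by norm_num]
    exact zsqm _ _ _ _ h6 (by decide)
  have h8 : (5 : ZMod 6164578258027337) ^ 175 = 1288654056914885 := by
    rw [show (175:ℕ) = 2 * 87 + 1 by norm_num]
    exact zsqm _ _ _ _ h7 (by decide)
  have h9 : (5 : ZMod 6164578258027337) ^ 350 = 4673234492969798 := by
    rw [show (350:ℕ) = 2 * 175 by norm_num]
    exact zsq _ _ _ _ h8 (by decide)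
  have h10 : (5 : ZMod 6164578258027337) ^ 700 = 2856335184228106 := by
    rw [show (700:ℕ) = 2 * 350 by norm_num]
    exact zsq _ _ _ _ h9 (by decide)
  have h11 : (5 : ZMod 6164578258027337) ^ 1401 = 643647731153091 := by
    rw [show (1401:ℕ) = 2 * 700 + 1 by norm_num]
    exact zsqm _ _ _ _ h10 (by decide)
  have h12 : (5 : ZMod 6164578258027337) ^ 2803 = 274772391566598 := by
    rw [show (2803:ℕ) = 2 * 1401 + 1 by norm_num]
    exact zsqm _ _ _ _ h11 (by decide)
  have h13 : (5 : ZMod 6164578258027337) ^ 5606 = 1613261787696269 := by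
    rw [show (5606:ℕ) = 2 * 2803 by norm_num]
    exact zsq _ _ _ _ h12 (by decide)
  have h14 : (5 : ZMod 6164578258027337) ^ 11213 = 947312991289010 := by
    rw [show (11213:ℕ) = 2 * 5606 + 1 by norm_num]
    exact zsqm _ _ _ _ h13 (by decide)
  have h15 : (5 : ZMod 6164578258027337) ^ 22426 = 668507778356229 := by
    rw [show (22426:ℕ) = 2 * 11213 by norm_num]
    exact zsq _ _ _ _ h14 (by decide)
  have h16 : (5 : ZMod 6164578258027337) ^ 44853 = 1082283431809278 := by
    rw [show (44853:ℕ) = 2 * 22426 + 1 by norm_num]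
    exact zsqm _ _ _ _ h15 (by decide)
  have h17 : (5 : ZMod 6164578258027337) ^ 89706 = 3241822396992972 := by
    rw [show (89706:ℕ) = 2 * 44853 by norm_num]
    exact zsq _ _ _ _ h16 (by decide)
  have h18 : (5 : ZMod 6164578258027337) ^ 179412 = 4991847069393932 := by
    rw [show (179412:ℕ) = 2 * 89706 by norm_num]
    exact zsq _ _ _ _ h17 (by decide)
  have h19 : (5 : ZMod 6164578258027337) ^ 358825 = 71717466730403 := by
    rw [show (358825:ℕ) = 2 * 179412 + 1 by norm_num]
    exact zsqm _ _ _ _ h18 (by decide)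
  have h20 : (5 : ZMod 6164578258027337) ^ 717651 = 5206320211727991 := by
    rw [show (717651:ℕ) = 2 * 358825 + 1 by norm_num]
    exact zsqm _ _ _ _ h19 (by decide)
  have h21 : (5 : ZMod 6164578258027337) ^ 1435302 = 2774446063039925 := by
    rw [show (1435302:ℕ) = 2 * 717651 by norm_num]
    exact zsq _ _ _ _ h20 (by decide)
  have h22 : (5 : ZMod 6164578258027337) ^ 2870605 = 3214062000963412 := by
    rw [show (2870605:ℕ) = 2 * 1435302 + 1 by norm_num]
    exact zsqm _ _ _ _ h21 (by decide)
  have h23 : (5 : ZMod 6164578258027337) ^ 5741210 = 1029983376954860 := by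
    rw [show (5741210:ℕ) = 2 * 2870605 by norm_num]
    exact zsq _ _ _ _ h22 (by decide)
  have h24 : (5 : ZMod 6164578258027337) ^ 11482421 = 2157800715332148 := by
    rw [show (11482421:ℕ) = 2 * 5741210 + 1 by norm_num]
    exact zsqm _ _ _ _ h23 (by decide)
  have h25 : (5 : ZMod 6164578258027337) ^ 22964843 = 2599678246879007 := by
    rw [show (22964843:ℕ) = 2 * 11482421 + 1 by norm_num]
    exact zsqm _ _ _ _ h24 (by decide)
  have h26 : (5 : ZMod 6164578258027337) ^ 45929687 = 3259344116111686 := by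
    rw [show (45929687:ℕ) = 2 * 22964843 + 1 by norm_num]
    exact zsqm _ _ _ _ h25 (by decide)
  have h27 : (5 : ZMod 6164578258027337) ^ 91859374 = 4210019787154263 := by
    rw [show (91859374:ℕ) = 2 * 45929687 by norm_num]
    exact zsq _ _ _ _ h26 (by decide)
  have h28 : (5 : ZMod 6164578258027337) ^ 183718748 = 1864053447274772 := by
    rw [show (183718748:ℕ) = 2 * 91859374 by norm_num]
    exact zsq _ _ _ _ h27 (by decide)
  have h29 : (5 : ZMod 6164578258027337) ^ 367437497 = 5235810108531825 := by
    rw [show (367437497:ℕ) = 2 * 183718748 + 1 by norm_num]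
    exact zsqm _ _ _ _ h28 (by decide)
  have h30 : (5 : ZMod 6164578258027337) ^ 734874994 = 3440863965545882 := by
    rw [show (734874994:ℕ) = 2 * 367437497 by norm_num]
    exact zsq _ _ _ _ h29 (by decide)
  have h31 : (5 : ZMod 6164578258027337) ^ 1469749989 = 1315008293133696 := by
    rw [show (1469749989:ℕ) = 2 * 734874994 + 1 by norm_num]
    exact zsqm _ _ _ _ h30 (by decide)
  have h32 : (5 : ZMod 6164578258027337) ^ 2939499978 = 4794168290371009 := by
    rw [show (2939499978:ℕ) = 2 * 1469749989 by norm_num]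
    exact zsq _ _ _ _ h31 (by decide)
  have h33 : (5 : ZMod 6164578258027337) ^ 5878999956 = 3997686835020952 := by
    rw [show (5878999956:ℕ) = 2 * 2939499978 by norm_num]
    exact zsq _ _ _ _ h32 (by decide)
  have h34 : (5 : ZMod 6164578258027337) ^ 11757999912 = 3405041477263919 := by
    rw [show (11757999912:ℕ) = 2 * 5878999956 by norm_num]
    exact zsq _ _ _ _ h33 (by decide)
  have h35 : (5 : ZMod 6164578258027337) ^ 23515999824 = 2713386165493378 := by
    rw [show (23515999824:ℕ) = 2 * 11757999912 by norm_num]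
    exact zsq _ _ _ _ h34 (by decide)
  have h36 : (5 : ZMod 6164578258027337) ^ 47031999649 = 2228318109922858 := by
    rw [show (47031999649:ℕ) = 2 * 23515999824 + 1 by norm_num]
    exact zsqm _ _ _ _ h35 (by decide)
  have h37 : (5 : ZMod 6164578258027337) ^ 94063999298 = 1459939065687306 := by
    rw [show (94063999298:ℕ) = 2 * 47031999649 by norm_num]
    exact zsq _ _ _ _ h36 (by decide)
  have h38 : (5 : ZMod 6164578258027337) ^ 188127998597 = 1753936848824352 := by
    rw [show (188127998597:ℕ) = 2 * 94063999298 + 1 by norm_num]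
    exact zsqm _ _ _ _ h37 (by decide)
  have h39 : (5 : ZMod 6164578258027337) ^ 376255997194 = 1280733949075401 := by
    rw [show (376255997194:ℕ) = 2 * 188127998597 by norm_num]
    exact zsq _ _ _ _ h38 (by decide)
  have h40 : (5 : ZMod 6164578258027337) ^ 752511994388 = 4281006551576916 := by
    rw [show (752511994388:ℕ) = 2 * 376255997194 by norm_num]
    exact zsq _ _ _ _ h39 (by decide)
  have h41 : (5 : ZMod 6164578258027337) ^ 1505023988776 = 3246490977716828 := by
    rw [show (1505023988776:ℕ) = 2 * 752511994388 by norm_num]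
    exact zsq _ _ _ _ h40 (by decide)
  have h42 : (5 : ZMod 6164578258027337) ^ 3010047977552 = 5407152230307811 := by
    rw [show (3010047977552:ℕ) = 2 * 1505023988776 by norm_num]
    exact zsq _ _ _ _ h41 (by decide)
  have h43 : (5 : ZMod 6164578258027337) ^ 6020095955104 = 1683315025801473 := by
    rw [show (6020095955104:ℕ) = 2 * 3010047977552 by norm_num]
    exact zsq _ _ _ _ h42 (by decide)
  have h44 : (5 : ZMod 6164578258027337) ^ 12040191910209 = 5095975631552966 := by
    rw [show (12040191910209:ℕ) = 2 * 6020095955104 + 1 by norm_num]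
    exact zsqm _ _ _ _ h43 (by decide)
  have h45 : (5 : ZMod 6164578258027337) ^ 24080383820419 = 4067996332302028 := by
    rw [show (24080383820419:ℕ) = 2 * 12040191910209 + 1 by norm_num]
    exact zsqm _ _ _ _ h44 (by decide)
  have h46 : (5 : ZMod 6164578258027337) ^ 48160767640838 = 320873716833544 := by
    rw [show (48160767640838:ℕ) = 2 * 24080383820419 by norm_num]
    exact zsq _ _ _ _ h45 (by decide)
  have h47 : (5 : ZMod 6164578258027337) ^ 96321535281677 = 3408135016287570 := by
    rw [show (96321535281677:ℕ) = 2 * 48160767640838 + 1 by norm_num]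
    exact zsqm _ _ _ _ h46 (by decide)
  have h48 : (5 : ZMod 6164578258027337) ^ 192643070563354 = 702213659787066 := by
    rw [show (192643070563354:ℕ) = 2 * 96321535281677 by norm_num]
    exact zsq _ _ _ _ h47 (by decide)
  have h49 : (5 : ZMod 6164578258027337) ^ 385286141126708 = 2076029656349667 := by
    rw [show (385286141126708:ℕ) = 2 * 192643070563354 by norm_num]
    exact zsq _ _ _ _ h48 (by decide)
  have h50 : (5 : ZMod 6164578258027337) ^ 770572282253417 = 360579777275476 := by
    rw [show (770572282253417:ℕ) = 2 * 385286141126708 + 1 by norm_num]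
    exact zsqm _ _ _ _ h49 (by decide)
  have h51 : (5 : ZMod 6164578258027337) ^ 1541144564506834 = 4010353805211044 := by
    rw [show (1541144564506834:ℕ) = 2 * 770572282253417 by norm_num]
    exact zsq _ _ _ _ h50 (by decide)
  have h52 : (5 : ZMod 6164578258027337) ^ 3082289129013668 = 6164578258027336 := by
    rw [show (3082289129013668:ℕ) = 2 * 1541144564506834 by norm_num]
    exact zsq _ _ _ _ h51 (by decide)
  exact h52

private lemma ch17 : (17 : ZMod 6164578258027337) ^ 3082289129013668 = 5417306154033980 := by
  have h1 : (17 : ZMod 6164578258027337) ^ 1 = 17 := pow_one _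
  have h2 : (17 : ZMod 6164578258027337) ^ 2 = 289 := by
    rw [pow_two]; decide
  have h3 : (17 : ZMod 6164578258027337) ^ 5 = 1419857 := by
    rw [show (5:ℕ) = 2 * 2 + 1 by norm_num]
    exact zsqm _ _ _ _ h2 (by decide)
  have h4 : (17 : ZMod 6164578258027337) ^ 10 = 2015993900449 := by
    rw [show (10:ℕ) = 2 * 5 by norm_num]
    exact zsq _ _ _ _ h3 (by decide)
  have h5 : (17 : ZMod 6164578258027337) ^ 21 = 49783680081975 := by
    rw [show (21:ℕ) = 2 * 10 + 1 by norm_num]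
    exact zsqm _ _ _ _ h4 (by decide)
  have h6 : (17 : ZMod 6164578258027337) ^ 43 = 3346659953884703 := by
    rw [show (43:ℕ) = 2 * 21 + 1 by norm_num]
    exact zsqm _ _ _ _ h5 (by decide)
  have h7 : (17 : ZMod 6164578258027337) ^ 87 = 3797082937447723 := by
    rw [show (87:ℕ) = 2 * 43 + 1 by norm_num]
    exact zsqm _ _ _ _ h6 (by decide)
  have h8 : (17 : ZMod 6164578258027337) ^ 175 = 2091063856822739 := by
    rw [show (175:ℕ) = 2 * 87 + 1 by norm_num]
    exact zsqm _ _ _ _ h7 (by decide)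
  have h9 : (17 : ZMod 6164578258027337) ^ 350 = 5736001590722350 := by
    rw [show (350:ℕ) = 2 * 175 by norm_num]
    exact zsq _ _ _ _ h8 (by decide)
  have h10 : (17 : ZMod 6164578258027337) ^ 700 = 5148267555912168 := by
    rw [show (700:ℕ) = 2 * 350 by norm_num]
    exact zsq _ _ _ _ h9 (by decide)
  have h11 : (17 : ZMod 6164578258027337) ^ 1401 = 2563298308548667 := by
    rw [show (1401:ℕ) = 2 * 700 + 1 by norm_num]
    exact zsqm _ _ _ _ h10 (by decide)
  have h12 : (17 : ZMod 6164578258027337) ^ 2803 = 460838789629364 := by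
    rw [show (2803:ℕ) = 2 * 1401 + 1 by norm_num]
    exact zsqm _ _ _ _ h11 (by decide)
  have h13 : (17 : ZMod 6164578258027337) ^ 5606 = 1877966991029285 := by
    rw [show (5606:ℕ) = 2 * 2803 by norm_num]
    exact zsq _ _ _ _ h12 (by decide)
  have h14 : (17 : ZMod 6164578258027337) ^ 11213 = 4158322342417581 := by
    rw [show (11213:ℕ) = 2 * 5606 + 1 by norm_num]
    exact zsqm _ _ _ _ h13 (by decide)
  have h15 : (17 : ZMod 6164578258027337) ^ 22426 = 112833045051724 := by
    rw [show (22426:ℕ) = 2 * 11213 by norm_num]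
    exact zsq _ _ _ _ h14 (by decide)
  have h16 : (17 : ZMod 6164578258027337) ^ 44853 = 352171708544227 := by
    rw [show (44853:ℕ) = 2 * 22426 + 1 by norm_num]
    exact zsqm _ _ _ _ h15 (by decide)
  have h17 : (17 : ZMod 6164578258027337) ^ 89706 = 5558284018551924 := by
    rw [show (89706:ℕ) = 2 * 44853 by norm_num]
    exact zsq _ _ _ _ h16 (by decide)
  have h18 : (17 : ZMod 6164578258027337) ^ 179412 = 2423145361916409 := by
    rw [show (179412:ℕ) = 2 * 89706 by norm_num]
    exact zsq _ _ _ _ h17 (by decide)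
  have h19 : (17 : ZMod 6164578258027337) ^ 358825 = 1675127504602078 := by
    rw [show (358825:ℕ) = 2 * 179412 + 1 by norm_num]
    exact zsqm _ _ _ _ h18 (by decide)
  have h20 : (17 : ZMod 6164578258027337) ^ 717651 = 503764372556933 := by
    rw [show (717651:ℕ) = 2 * 358825 + 1 by norm_num]
    exact zsqm _ _ _ _ h19 (by decide)
  have h21 : (17 : ZMod 6164578258027337) ^ 1435302 = 3884134687927700 := by
    rw [show (1435302:ℕ) = 2 * 717651 by norm_num]
    exact zsq _ _ _ _ h20 (by decide)
  have h22 : (17 : ZMod 6164578258027337) ^ 2870605 = 2157569891567382 := by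
    rw [show (2870605:ℕ) = 2 * 1435302 + 1 by norm_num]
    exact zsqm _ _ _ _ h21 (by decide)
  have h23 : (17 : ZMod 6164578258027337) ^ 5741210 = 1021926354895385 := by
    rw [show (5741210:ℕ) = 2 * 2870605 by norm_num]
    exact zsq _ _ _ _ h22 (by decide)
  have h24 : (17 : ZMod 6164578258027337) ^ 11482421 = 373173515481337 := by
    rw [show (11482421:ℕ) = 2 * 5741210 + 1 by norm_num]
    exact zsqm _ _ _ _ h23 (by decide)
  have h25 : (17 : ZMod 6164578258027337) ^ 22964843 = 1803710789379365 := by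
    rw [show (22964843:ℕ) = 2 * 11482421 + 1 by norm_num]
    exact zsqm _ _ _ _ h24 (by decide)
  have h26 : (17 : ZMod 6164578258027337) ^ 45929687 = 2207012222105932 := by
    rw [show (45929687:ℕ) = 2 * 22964843 + 1 by norm_num]
    exact zsqm _ _ _ _ h25 (by decide)
  have h27 : (17 : ZMod 6164578258027337) ^ 91859374 = 4156592237678667 := by
    rw [show (91859374:ℕ) = 2 * 45929687 by norm_num]
    exact zsq _ _ _ _ h26 (by decide)
  have h28 : (17 : ZMod 6164578258027337) ^ 183718748 = 5462282574498652 := by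
    rw [show (183718748:ℕ) = 2 * 91859374 by norm_num]
    exact zsq _ _ _ _ h27 (by decide)
  have h29 : (17 : ZMod 6164578258027337) ^ 367437497 = 3321104021375289 := by
    rw [show (367437497:ℕ) = 2 * 183718748 + 1 by norm_num]
    exact zsqm _ _ _ _ h28 (by decide)
  have h30 : (17 : ZMod 6164578258027337) ^ 734874994 = 4182430434728635 := by
    rw [show (734874994:ℕ) = 2 * 367437497 by norm_num]
    exact zsq _ _ _ _ h29 (by decide)
  have h31 : (17 : ZMod 6164578258027337) ^ 1469749989 = 5610016036834524 := by
    rw [show (1469749989:ℕ) = 2 * 734874994 + 1 by norm_num]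
    exact zsqm _ _ _ _ h30 (by decide)
  have h32 : (17 : ZMod 6164578258027337) ^ 2939499978 = 4948080392178618 := by
    rw [show (2939499978:ℕ) = 2 * 1469749989 by norm_num]
    exact zsq _ _ _ _ h31 (by decide)
  have h33 : (17 : ZMod 6164578258027337) ^ 5878999956 = 3845369725055640 := by
    rw [show (5878999956:ℕ) = 2 * 2939499978 by norm_num]
    exact zsq _ _ _ _ h32 (by decide)
  have h34 : (17 : ZMod 6164578258027337) ^ 11757999912 = 1667687167397054 := by
    rw [show (11757999912:ℕ) = 2 * 5878999956 by norm_num]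
    exact zsq _ _ _ _ h33 (by decide)
  have h35 : (17 : ZMod 6164578258027337) ^ 23515999824 = 1224751382064386 := by
    rw [show (23515999824:ℕ) = 2 * 11757999912 by norm_num]
    exact zsq _ _ _ _ h34 (by decide)
  have h36 : (17 : ZMod 6164578258027337) ^ 47031999649 = 63657729515852 := by
    rw [show (47031999649:ℕ) = 2 * 23515999824 + 1 by norm_num]
    exact zsqm _ _ _ _ h35 (by decide)
  have h37 : (17 : ZMod 6164578258027337) ^ 94063999298 = 2008081045395717 := by
    rw [show (94063999298:ℕ) = 2 * 47031999649 by norm_num]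
    exact zsq _ _ _ _ h36 (by decide)
  have h38 : (17 : ZMod 6164578258027337) ^ 188127998597 = 113081480660548 := by
    rw [show (188127998597:ℕ) = 2 * 94063999298 + 1 by norm_num]
    exact zsqm _ _ _ _ h37 (by decide)
  have h39 : (17 : ZMod 6164578258027337) ^ 376255997194 = 2108814766446181 := by
    rw [show (376255997194:ℕ) = 2 * 188127998597 by norm_num]
    exact zsq _ _ _ _ h38 (by decide)
  have h40 : (17 : ZMod 6164578258027337) ^ 752511994388 = 1287887040024374 := by
    rw [show (752511994388:ℕ) = 2 * 376255997194 by norm_num]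
    exact zsq _ _ _ _ h39 (by decide)
  have h41 : (17 : ZMod 6164578258027337) ^ 1505023988776 = 1276229120193680 := by
    rw [show (1505023988776:ℕ) = 2 * 752511994388 by norm_num]
    exact zsq _ _ _ _ h40 (by decide)
  have h42 : (17 : ZMod 6164578258027337) ^ 3010047977552 = 2365065695785441 := by
    rw [show (3010047977552:ℕ) = 2 * 1505023988776 by norm_num]
    exact zsq _ _ _ _ h41 (by decide)
  have h43 : (17 : ZMod 6164578258027337) ^ 6020095955104 = 4579601485515511 := by
    rw [show (6020095955104:ℕ) = 2 * 3010047977552 by norm_num]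
    exact zsq _ _ _ _ h42 (by decide)
  have h44 : (17 : ZMod 6164578258027337) ^ 12040191910209 = 2275562917882810 := by
    rw [show (12040191910209:ℕ) = 2 * 6020095955104 + 1 by norm_num]
    exact zsqm _ _ _ _ h43 (by decide)
  have h45 : (17 : ZMod 6164578258027337) ^ 24080383820419 = 671250277842402 := by
    rw [show (24080383820419:ℕ) = 2 * 12040191910209 + 1 by norm_num]
    exact zsqm _ _ _ _ h44 (by decide)
  have h46 : (17 : ZMod 6164578258027337) ^ 48160767640838 = 3564892297708364 := by
    rw [show (48160767640838:ℕ) = 2 * 24080383820419 by norm_num]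
    exact zsq _ _ _ _ h45 (by decide)
  have h47 : (17 : ZMod 6164578258027337) ^ 96321535281677 = 5312286636666460 := by
    rw [show (96321535281677:ℕ) = 2 * 48160767640838 + 1 by norm_num]
    exact zsqm _ _ _ _ h46 (by decide)
  have h48 : (17 : ZMod 6164578258027337) ^ 192643070563354 = 2908561947953656 := by
    rw [show (192643070563354:ℕ) = 2 * 96321535281677 by norm_num]
    exact zsq _ _ _ _ h47 (by decide)
  have h49 : (17 : ZMod 6164578258027337) ^ 385286141126708 = 2370622595453885 := by
    rw [show (385286141126708:ℕ) = 2 * 192643070563354 by norm_num]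
    exact zsq _ _ _ _ h48 (by decide)
  have h50 : (17 : ZMod 6164578258027337) ^ 770572282253417 = 1479661270026531 := by
    rw [show (770572282253417:ℕ) = 2 * 385286141126708 + 1 by norm_num]
    exact zsqm _ _ _ _ h49 (by decide)
  have h51 : (17 : ZMod 6164578258027337) ^ 1541144564506834 = 1105224420773275 := by
    rw [show (1541144564506834:ℕ) = 2 * 770572282253417 by norm_num]
    exact zsq _ _ _ _ h50 (by decide)
  have h52 : (17 : ZMod 6164578258027337) ^ 3082289129013668 = 5417306154033980 := by
    rw [show (3082289129013668:ℕ) = 2 * 1541144564506834 by norm_num]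
    exact zsq _ _ _ _ h51 (by decide)
  exact h52

private lemma sqrtN : Nat.sqrt 6164578258027337 = 78514828 := by norm_num
  

private lemma sqrtN2 : Nat.sqrt (6164578258027337 / 2) = 55518367 := by norm_num

private lemma neg_one_eq : (-1 : ZMod 6164578258027337) = 6164578258027336 := by decide

private lemma he : (6164578258027337 - 1) / 2 = 3082289129013668 := by norm_num

/-- `N = 6164578258027337 = 64107089 * 96160633` is composite, yet it passes the first
two steps of the Gauss-Euler test and the quadratic-reciprocity test at the smallest
prime `p ≡ 5 (mod 8)` (namely `5`), while failing it at `17 ≡ 1 (mod 8)`. -/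
theorem pseudoprime_6164578258027337 :
    (6164578258027337 : ℕ) = 64107089 * 96160633 ∧
    ¬ (6164578258027337 : ℕ).Prime ∧
    6164578258027337 % 8 = 1 ∧
    (2 : ZMod 6164578258027337) ^ ((6164578258027337 - 1) / 2) = 1 ∧
    (Nat.sqrt 6164578258027337 : ZMod 6164578258027337) ^ ((6164578258027337 - 1) / 2)
      = -1 ∧
    ((Nat.sqrt 6164578258027337 + 1 : ℕ) : ZMod 6164578258027337)
      ^ ((6164578258027337 - 1) / 2) = 1 ∧
    (Nat.sqrt (6164578258027337 / 2) : ZMod 6164578258027337)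
      ^ ((6164578258027337 - 1) / 2) = 1 ∧
    ((Nat.sqrt (6164578258027337 / 2) + 1 : ℕ) : ZMod 6164578258027337)
      ^ ((6164578258027337 - 1) / 2) = -1 ∧
    jacobiSym 6164578258027337 5 = -1 ∧
    (5 : ZMod 6164578258027337) ^ ((6164578258027337 - 1) / 2) = -1 ∧
    jacobiSym 6164578258027337 17 = -1 ∧
    (17 : ZMod 6164578258027337) ^ ((6164578258027337 - 1) / 2) ≠ -1 := by
  have hcs : ((Nat.sqrt 6164578258027337 : ℕ) : ZMod 6164578258027337)
      = (78514828 : ZMod 6164578258027337) := by rw [sqrtN]; norm_cast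
  have hcs1 : ((Nat.sqrt 6164578258027337 + 1 : ℕ) : ZMod 6164578258027337)
      = (78514829 : ZMod 6164578258027337) := by rw [sqrtN]; norm_cast
  have hct : ((Nat.sqrt (6164578258027337 / 2) : ℕ) : ZMod 6164578258027337)
      = (55518367 : ZMod 6164578258027337) := by rw [sqrtN2]; norm_cast
  have hct1 : ((Nat.sqrt (6164578258027337 / 2) + 1 : ℕ) : ZMod 6164578258027337)
      = (55518368 : ZMod 6164578258027337) := by rw [sqrtN2]; norm_cast
  refine ⟨by norm_num, ?_, by norm_num, ?_, ?_, ?_, ?_, ?_, by norm_num, ?_, by norm_num, ?_⟩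
  · intro hp
    have hd : (64107089 : ℕ) ∣ 6164578258027337 := ⟨96160633, by norm_num⟩
    rcases hp.eq_one_or_self_of_dvd _ hd with h | h <;> norm_num at h
  · rw [he]; exact ch2
  · rw [he, hcs, chs, neg_one_eq]
  · rw [he, hcs1]; exact chs1
  · rw [he, hct]; exact cht
  · rw [he, hct1, cht1, neg_one_eq]
  · rw [he, ch5, neg_one_eq]
  · rw [he, ch17, neg_one_eq]; decide
end

section
/- Let N = 17364052083370132981. Then N = 548893 × 1646677 × 19211221 (so N is composite), yet N is a strong probable prime to each of the five bases 2, ⌊√N⌋, ⌊√N⌋+1, ⌊√(N/2)⌋, and ⌊√(N/2)⌋+1, and moreover, for the smallest prime p with p ≡ 1 (mod 4) and Jacobi symbol (N | p) = -1, it holds that p^((N-1)/2) ≡ -1 (mod N). -/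
/-! Since `N ≡ 5 (mod 8)`, `N - 1 = 2 ^ 2 * t` with `t` odd, so an Euler-type congruence
`a ^ ((N - 1) / 2) ≡ -1` is the witness `i = 1` of strong probable primality. The six
congruences needed are checked by binary exponentiation modulo `N`;
`p = 17` is minimal because `(N | 5) = (N | 13) = 1`. -/

/-- `n` is a strong probable prime to base `a`: writing `n - 1 = 2 ^ s * t` with `t` odd,
either `a ^ t ≡ 1 (mod n)` or `a ^ (2 ^ i * t) ≡ -1 (mod n)` for some `0 ≤ i < s`. -/
def StrongProbablePrime (n a : ℕ) : Prop :=
  ∃ s t : ℕ, Odd t ∧ n - 1 = 2 ^ s * t ∧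
    ((a : ZMod n) ^ t = 1 ∨ ∃ i < s, (a : ZMod n) ^ (2 ^ i * t) = -1)

theorem StrongProbablePrime.of_pow_half_eq_neg_one {n a : ℕ} (hn : n % 8 = 5)
    (h : (a : ZMod n) ^ ((n - 1) / 2) = -1) : StrongProbablePrime n a := by
  refine ⟨2, (n - 1) / 4, ⟨(n - 1) / 8, by omega⟩, by omega, Or.inr ⟨1, by norm_num, ?_⟩⟩
  rwa [show 2 ^ 1 * ((n - 1) / 4) = (n - 1) / 2 by omega]

/-- `N = 17364052083370132981 = 548893 * 1646677 * 19211221` is composite, yet it is a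
strong probable prime to the five bases `2, ⌊√N⌋, ⌊√N⌋+1, ⌊√(N/2)⌋, ⌊√(N/2)⌋+1`, and for
the smallest prime `p ≡ 1 (mod 4)` with Jacobi symbol `(N | p) = -1` it holds that
`p ^ ((N-1)/2) ≡ -1 (mod N)`. -/
theorem pseudoprime_17364052083370132981 :
    (17364052083370132981 : ℕ) = 548893 * 1646677 * 19211221 ∧
    ¬ (17364052083370132981 : ℕ).Prime ∧
    (∀ a ∈ ({2, Nat.sqrt 17364052083370132981, Nat.sqrt 17364052083370132981 + 1,
        Nat.sqrt (17364052083370132981 / 2),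
        Nat.sqrt (17364052083370132981 / 2) + 1} : Finset ℕ),
      StrongProbablePrime 17364052083370132981 a) ∧
    ∃ p : ℕ, p.Prime ∧ p % 4 = 1 ∧ jacobiSym 17364052083370132981 p = -1 ∧
      (∀ q : ℕ, q.Prime → q % 4 = 1 → jacobiSym 17364052083370132981 q = -1 → p ≤ q) ∧
      (p : ZMod 17364052083370132981) ^ ((17364052083370132981 - 1) / 2) = -1 := by
  have euler : ∀ a ∈ ({2, 4167019568, 4167019569, 2946527794, 2946527795, 17} : Finset ℕ),
      (a : ZMod 17364052083370132981) ^ ((17364052083370132981 - 1) / 2) = -1 := by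
    simp only [Finset.mem_insert, Finset.mem_singleton]
    rintro a (rfl | rfl | rfl | rfl | rfl | rfl) <;> reduce_mod_char
  have sqrt_N : Nat.sqrt 17364052083370132981 = 4167019568 := by norm_num
  have sqrt_half_N : Nat.sqrt (17364052083370132981 / 2) = 2946527794 := by norm_num
  refine ⟨by norm_num, by norm_num, fun a ha => ?_, 17, by norm_num, by norm_num, by norm_num,
    fun q hq hq4 hqN => ?_, euler 17 (by simp)⟩
  · refine StrongProbablePrime.of_pow_half_eq_neg_one (by norm_num) (euler a ?_)
    simp only [sqrt_N, sqrt_half_N, Finset.mem_insert, Finset.mem_singleton] at ha ⊢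
    omega
  · by_contra! hlt
    interval_cases q <;> norm_num at *
end

section
/- The number 172081 is composite, and it satisfies 172081 ≡ 1 (mod 8), 2^86040 ≡ 1 (mod 172081), and a^86040 ≡ 1 (mod 172081) for each a in {414, 415, 293} (where 414 = ⌊√172081⌋ and 293 = ⌊√(172081/2)⌋), but 294^86040 is congruent to neither 1 nor -1 modulo 172081. -/
/-!
`172081 = 7 · 13 · 31 · 61` is a Carmichael number whose Carmichael function `lcm(6, 12, 30, 60) = 60`
divides `86040`, so every base coprime to it passes the Euler test; the positive congruences are
checked by computing the powers in `ℕ`. The failing base `294 = 2 · 3 · 7²` shares the factor `7`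
with `172081`, so its power vanishes modulo `7` and hence cannot be `±1` modulo `172081`.
-/

theorem ZMod.natCast_pow_eq_one_of_pow_mod {a k n : ℕ} (h : a ^ k % n = 1 % n) :
    (a : ZMod n) ^ k = 1 := by
  rw [← Nat.cast_pow, ← Nat.cast_one, ZMod.natCast_eq_natCast_iff']
  exact h

theorem ZMod.natCast_pow_ne_one_and_ne_neg_one_of_dvd {n p a k : ℕ} (hp : 1 < p)
    (hpn : p ∣ n) (hpa : p ∣ a) (hk : k ≠ 0) :
    (a : ZMod n) ^ k ≠ 1 ∧ (a : ZMod n) ^ k ≠ -1 := by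
  have : Fact (1 < p) := ⟨hp⟩
  have hzero : ZMod.castHom hpn (ZMod p) ((a : ZMod n) ^ k) = 0 := by
    rw [map_pow, map_natCast, (ZMod.natCast_eq_zero_iff a p).2 hpa, zero_pow hk]
  constructor <;> intro h <;> rw [h] at hzero
  · exact one_ne_zero (by rwa [map_one] at hzero)
  · exact one_ne_zero (by rwa [map_neg, map_one, neg_eq_zero] at hzero)

/-- `172081` is composite, satisfies `172081 ≡ 1 (mod 8)`, `2 ^ 86040 ≡ 1 (mod 172081)`,
and `a ^ 86040 ≡ 1 (mod 172081)` for `a ∈ {414, 415, 293}` (with `414 = ⌊√172081⌋` and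
`293 = ⌊√(172081/2)⌋`), but `294 ^ 86040` is congruent to neither `1` nor `-1`
modulo `172081`. -/
theorem gauss_euler_detects_172081 :
    ¬ (172081 : ℕ).Prime ∧
    172081 % 8 = 1 ∧
    (2 : ZMod 172081) ^ 86040 = 1 ∧
    Nat.sqrt 172081 = 414 ∧
    Nat.sqrt (172081 / 2) = 293 ∧
    (∀ a ∈ ({414, 415, 293} : Finset ℕ), (a : ZMod 172081) ^ 86040 = 1) ∧
    (294 : ZMod 172081) ^ 86040 ≠ 1 ∧
    (294 : ZMod 172081) ^ 86040 ≠ -1 := by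
  have h7 : 7 ∣ 172081 := by norm_num
  have hcomposite : ¬ (172081 : ℕ).Prime := Nat.not_prime_of_dvd_of_lt h7 (by norm_num) (by norm_num)
  have hbase2 : ((2 : ℕ) : ZMod 172081) ^ 86040 = 1 :=
    ZMod.natCast_pow_eq_one_of_pow_mod (by decide +kernel)
  have hbases : ∀ a ∈ ({414, 415, 293} : Finset ℕ), (a : ZMod 172081) ^ 86040 = 1 := by
    simp only [Finset.mem_insert, Finset.mem_singleton]
    rintro a (rfl | rfl | rfl) <;> exact ZMod.natCast_pow_eq_one_of_pow_mod (by decide +kernel)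
  have hbase294 := ZMod.natCast_pow_ne_one_and_ne_neg_one_of_dvd (a := 294) (k := 86040)
    (by norm_num : 1 < 7) h7 (by norm_num) (by norm_num)
  rw [Nat.cast_ofNat] at hbase2 hbase294
  exact ⟨hcomposite, by norm_num, hbase2, by norm_num, by norm_num, hbases, hbase294⟩
end
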